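/- arXiv:1409.4708 — 13 statements merged into one kernel-verified Lean document; each statement's English description precedes it below -/
import Mathlib

section
/- Let A be a finite set and H a real-valued function on subsets of A with H(∅) = 0, and let σ assign to each a ∈ A a positive real scale σ(a). For each nonempty S ⊆ A define the shared information I(S) = −∑_{T ⊆ S} (−1)^{|T|} H(T ∪ (A∖S)), and the scale s(S) = ∑_{a∈S} σ(a). Then the total scale-weighted information is conserved: ∑_{∅ ≠ S ⊆ A} s(S)·I(S) = ∑_{a∈A} σ(a)·H({a}). -/
open Finset

/-- The shared information of the irreducible dependency that includes the components
in `S` and excludes those in `A \ S`: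
`I(S) = −∑_{T ⊆ S} (−1)^{|T|} H(T ∪ (A∖S))`. -/
noncomputable def sharedInfo {α : Type*} [DecidableEq α]
    (A : Finset α) (H : Finset α → ℝ) (S : Finset α) : ℝ :=
  -∑ T ∈ S.powerset, (-1 : ℝ) ^ T.card * H (T ∪ (A \ S))

lemma sum_pm_one_real {α : Type*} [DecidableEq α] (x : Finset α) :
    (∑ m ∈ x.powerset, (-1 : ℝ) ^ m.card) = if x = ∅ then 1 else 0 := by
  have h := Finset.sum_powerset_neg_one_pow_card (x := x)
  have : ((∑ m ∈ x.powerset, (-1 : ℤ) ^ m.card : ℤ) : ℝ)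
      = ∑ m ∈ x.powerset, (-1 : ℝ) ^ m.card := by push_cast; ring
  rw [← this, h]
  split <;> norm_num

lemma key {α : Type*} [DecidableEq α] (A : Finset α) (H : Finset α → ℝ)
    (hH0 : H ∅ = 0) (a : α) (ha : a ∈ A) :
    ∑ S ∈ A.powerset.filter (a ∈ ·), sharedInfo A H S = H {a} := by
  set B := A.erase a with hB
  -- reindex S ↦ A \ S
  have step1 : ∑ S ∈ A.powerset.filter (a ∈ ·), sharedInfo A H S
      = ∑ C ∈ B.powerset, (-∑ T ∈ (A \ C).powerset, (-1 : ℝ) ^ T.card * H (T ∪ C)) := by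
    refine Finset.sum_nbij' (fun S => A \ S) (fun C => A \ C) ?_ ?_ ?_ ?_ ?_
    · intro S hS
      simp only [mem_filter, mem_powerset] at hS
      simp only [mem_powerset, hB]
      intro x hx
      simp only [mem_sdiff] at hx
      exact Finset.mem_erase.mpr ⟨fun h => hx.2 (by rw [h]; exact hS.2), hx.1⟩
    · intro C hC
      simp only [mem_powerset, hB] at hC
      simp only [mem_filter, mem_powerset, mem_sdiff]
      refine ⟨Finset.sdiff_subset, ha, fun h => ?_⟩
      exact (Finset.mem_erase.mp (hC h)).1 rfl
    · intro S hS
      simp only [mem_filter, mem_powerset] at hS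
      exact Finset.sdiff_sdiff_eq_self hS.1
    · intro C hC
      simp only [mem_powerset, hB] at hC
      exact Finset.sdiff_sdiff_eq_self (hC.trans (Finset.erase_subset _ _))
    · intro S hS
      simp only [mem_filter, mem_powerset] at hS
      unfold sharedInfo
      rw [Finset.sdiff_sdiff_eq_self hS.1]
  rw [step1, Finset.sum_neg_distrib]
  -- reindex pairs (C,T) ↦ (W = T ∪ C, C)
  have step2 : ∑ C ∈ B.powerset, ∑ T ∈ (A \ C).powerset, (-1 : ℝ) ^ T.card * H (T ∪ C)
      = ∑ W ∈ A.powerset, ∑ C ∈ (W ∩ B).powerset, (-1 : ℝ) ^ (W \ C).card * H W := by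
    rw [Finset.sum_sigma', Finset.sum_sigma']
    refine Finset.sum_nbij' (fun p => ⟨p.2 ∪ p.1, p.1⟩) (fun q => ⟨q.2, q.1 \ q.2⟩) ?_ ?_ ?_ ?_ ?_
    · rintro ⟨C, T⟩ hp
      simp only [Finset.mem_sigma, mem_powerset] at hp ⊢
      constructor
      · exact Finset.union_subset (hp.2.trans Finset.sdiff_subset)
          (hp.1.trans (Finset.erase_subset _ _))
      · exact Finset.subset_inter Finset.subset_union_right hp.1
    · rintro ⟨W, C⟩ hq
      simp only [Finset.mem_sigma, mem_powerset] at hq ⊢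
      refine ⟨hq.2.trans Finset.inter_subset_right, ?_⟩
      intro x hx
      simp only [mem_sdiff] at hx ⊢
      exact ⟨hq.1 hx.1, hx.2⟩
    · rintro ⟨C, T⟩ hp
      simp only [Finset.mem_sigma, mem_powerset] at hp
      have hd : Disjoint T C := by
        refine Finset.disjoint_left.mpr fun x hxT hxC => ?_
        exact (Finset.mem_sdiff.mp (hp.2 hxT)).2 hxC
      have : (T ∪ C) \ C = T := by
        rw [Finset.union_sdiff_right, Finset.sdiff_eq_self_of_disjoint hd]
      simp [this]
    · rintro ⟨W, C⟩ hq
      simp only [Finset.mem_sigma, mem_powerset] at hq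
      have hCW : C ⊆ W := hq.2.trans Finset.inter_subset_left
      simp [Finset.sdiff_union_of_subset hCW]
    · rintro ⟨C, T⟩ hp
      simp only [Finset.mem_sigma, mem_powerset] at hp
      have hd : Disjoint T C := by
        refine Finset.disjoint_left.mpr fun x hxT hxC => ?_
        exact (Finset.mem_sdiff.mp (hp.2 hxT)).2 hxC
      have : (T ∪ C) \ C = T := by
        rw [Finset.union_sdiff_right, Finset.sdiff_eq_self_of_disjoint hd]
      simp [this]
  rw [step2]
  -- evaluate the inner sums
  have step3 : ∀ W ∈ A.powerset, ∑ C ∈ (W ∩ B).powerset, (-1 : ℝ) ^ (W \ C).card * H W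
      = (if W ∩ B = ∅ then 1 else 0) * ((-1 : ℝ) ^ W.card * H W) := by
    intro W hW
    rw [← Finset.sum_mul]
    have hsum : ∀ C ∈ (W ∩ B).powerset, ((-1 : ℝ)) ^ (W \ C).card
        = (-1 : ℝ) ^ W.card * (-1 : ℝ) ^ C.card := by
      intro C hC
      have hCW : C ⊆ W := (Finset.mem_powerset.mp hC).trans Finset.inter_subset_left
      have hcard : (W \ C).card + C.card = W.card := Finset.card_sdiff_add_card_eq_card hCW
      have : ((-1 : ℝ)) ^ (W \ C).card * (-1 : ℝ) ^ C.card = (-1 : ℝ) ^ W.card := by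
        rw [← pow_add, hcard]
      calc ((-1 : ℝ)) ^ (W \ C).card
          = ((-1 : ℝ)) ^ (W \ C).card * ((-1 : ℝ) ^ C.card * (-1 : ℝ) ^ C.card) := by
            rw [← pow_add, ← two_mul, pow_mul]; norm_num
        _ = (-1 : ℝ) ^ W.card * (-1 : ℝ) ^ C.card := by rw [← mul_assoc, this]
    rw [Finset.sum_congr rfl hsum, ← Finset.mul_sum, sum_pm_one_real]
    split <;> ring
  rw [Finset.sum_congr rfl step3]
  have hfilt : ∀ W ∈ A.powerset, (if W ∩ B = ∅ then (1:ℝ) else 0) * ((-1 : ℝ) ^ W.card * H W)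
      = if W ∩ B = ∅ then (-1 : ℝ) ^ W.card * H W else 0 := by
    intro W _; split <;> simp
  rw [Finset.sum_congr rfl hfilt, ← Finset.sum_filter]
  have hset : A.powerset.filter (fun W => W ∩ B = ∅) = ({a} : Finset α).powerset := by
    ext W
    simp only [mem_filter, mem_powerset, hB]
    constructor
    · rintro ⟨hWA, hWB⟩ x hx
      have hxA := hWA hx
      simp only [Finset.mem_singleton]
      by_contra hxa
      have : x ∈ W ∩ A.erase a := Finset.mem_inter.mpr ⟨hx, Finset.mem_erase.mpr ⟨hxa, hxA⟩⟩
      simp [hWB] at this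
    · intro hW
      refine ⟨hW.trans (Finset.singleton_subset_iff.mpr ha), ?_⟩
      rw [Finset.eq_empty_iff_forall_notMem]
      intro x hx
      have hx1 := Finset.mem_inter.mp hx
      have : x = a := Finset.mem_singleton.mp (hW hx1.1)
      exact (Finset.mem_erase.mp hx1.2).1 this
  rw [hset]
  have hpow : ({a} : Finset α).powerset = {∅, {a}} := by
    rw [show ({a} : Finset α) = insert a ∅ from rfl, Finset.powerset_insert,
      Finset.powerset_empty]
    rfl
  rw [hpow, Finset.sum_pair (fun h => by simpa using congrArg (a ∈ ·) h : (∅ : Finset α) ≠ {a})]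
  simp [hH0]

/-- Conservation of total scale-weighted information:
`∑_{∅ ≠ S ⊆ A} s(S)·I(S) = ∑_{a∈A} σ(a)·H({a})`. -/
theorem total_scale_weighted_information {α : Type*} [DecidableEq α]
    (A : Finset α) (H : Finset α → ℝ) (σ : α → ℝ)
    (hH0 : H ∅ = 0) (hσ : ∀ a ∈ A, 0 < σ a) :
    ∑ S ∈ A.powerset.filter (· ≠ ∅), (∑ a ∈ S, σ a) * sharedInfo A H S
      = ∑ a ∈ A, σ a * H {a} := by
  have h1 : ∑ S ∈ A.powerset.filter (· ≠ ∅), (∑ a ∈ S, σ a) * sharedInfo A H S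
      = ∑ S ∈ A.powerset, (∑ a ∈ S, σ a) * sharedInfo A H S := by
    refine Finset.sum_filter_of_ne fun S _ hne => ?_
    intro h
    subst h
    simp at hne
  rw [h1]
  have h2 : ∀ S ∈ A.powerset, (∑ a ∈ S, σ a) * sharedInfo A H S
      = ∑ a ∈ S, σ a * sharedInfo A H S := fun S _ => Finset.sum_mul ..
  rw [Finset.sum_congr rfl h2]
  rw [Finset.sum_comm' (s := A.powerset) (t := fun S => S) (t' := A)
    (s' := fun a => A.powerset.filter (a ∈ ·)) (fun S b => by
      simp only [mem_filter, mem_powerset]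
      constructor
      · rintro ⟨hS, hb⟩; exact ⟨⟨hS, hb⟩, hS hb⟩
      · rintro ⟨⟨hS, hb⟩, _⟩; exact ⟨hS, hb⟩)]
  refine Finset.sum_congr rfl fun a ha => ?_
  rw [← Finset.mul_sum, key A H hH0 a ha]
end

section
/- Let A be a finite set and H a real-valued function on subsets of A with H(∅) = 0. For each nonempty S ⊆ A define I(S) = −∑_{T ⊆ S} (−1)^{|T|} H(T ∪ (A∖S)). Then for every subset U ⊆ A, ∑_{S ⊆ A nonempty, S ∩ U ≠ ∅} I(S) = H(U); that is, the shared information values I(S) solve the defining system of equations of the signed information measure on the dependency space. -/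
open Finset

section aux
variable {α : Type*} [DecidableEq α]

lemma aux_neg_one_pow_sum (s : Finset α) :
    ∑ T ∈ s.powerset, (-1 : ℝ) ^ T.card = if s = ∅ then 1 else 0 := by
  have h := @Finset.sum_powerset_neg_one_pow_card α _ s
  have : ((∑ T ∈ s.powerset, (-1 : ℤ) ^ T.card : ℤ) : ℝ)
      = ∑ T ∈ s.powerset, (-1 : ℝ) ^ T.card := by push_cast; rfl
  rw [← this, h]
  split <;> norm_num

lemma aux_inter_union_sdiff {A S W : Finset α} (hW : W ⊆ A) (h : A \ S ⊆ W) :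
    (W ∩ S) ∪ (A \ S) = W := by
  ext a
  simp only [mem_union, mem_inter, mem_sdiff]
  constructor
  · rintro (⟨h1, _⟩ | h2)
    · exact h1
    · exact h (mem_sdiff.2 h2)
  · intro hw
    by_cases hs : a ∈ S
    · exact Or.inl ⟨hw, hs⟩
    · exact Or.inr ⟨hW hw, hs⟩

lemma aux_union_inter {T S A : Finset α} (hT : T ⊆ S) :
    (T ∪ (A \ S)) ∩ S = T := by
  rw [union_inter_distrib_right, sdiff_inter_self, union_empty, inter_eq_left.2 hT]

lemma aux_sharedInfo_eq (A : Finset α) (H : Finset α → ℝ) {S : Finset α} (hS : S ⊆ A) :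
    sharedInfo A H S
      = ∑ W ∈ A.powerset.filter (fun W => A \ S ⊆ W),
          -((-1 : ℝ) ^ (W ∩ S).card * H W) := by
  unfold sharedInfo
  rw [Finset.sum_neg_distrib, neg_inj]
  refine Finset.sum_bij' (fun T _ => T ∪ (A \ S)) (fun W _ => W ∩ S) ?_ ?_ ?_ ?_ ?_
  · intro T hT
    rw [mem_powerset] at hT
    rw [mem_filter, mem_powerset]
    exact ⟨union_subset (hT.trans hS) (sdiff_subset), subset_union_right⟩
  · intro W hW
    rw [mem_powerset]
    exact inter_subset_right
  · intro T hT
    rw [mem_powerset] at hT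
    exact aux_union_inter hT
  · intro W hW
    rw [mem_filter, mem_powerset] at hW
    exact aux_inter_union_sdiff hW.1 hW.2
  · intro T hT
    rw [mem_powerset] at hT
    rw [aux_union_inter hT]

end aux

/-- The shared information values solve the defining system of equations of the
signed information measure on the dependency space: for every `U ⊆ A`,
`∑_{S ⊆ A nonempty, S ∩ U ≠ ∅} I(S) = H(U)`. -/
theorem sharedInfo_solves_infosum {α : Type*} [DecidableEq α]
    (A : Finset α) (H : Finset α → ℝ) (hH0 : H ∅ = 0) :
    ∀ U ⊆ A,
      ∑ S ∈ A.powerset.filter (fun S => S ≠ ∅ ∧ S ∩ U ≠ ∅), sharedInfo A H S = H U := by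
  intro U hU
  set F := A.powerset.filter (fun S => S ≠ ∅ ∧ S ∩ U ≠ ∅) with hF
  have hFsub : ∀ S ∈ F, S ⊆ A := by
    intro S hS
    rw [hF, mem_filter, mem_powerset] at hS
    exact hS.1
  calc ∑ S ∈ F, sharedInfo A H S
      = ∑ S ∈ F, ∑ W ∈ A.powerset.filter (fun W => A \ S ⊆ W),
          -((-1 : ℝ) ^ (W ∩ S).card * H W) :=
        Finset.sum_congr rfl fun S hS => aux_sharedInfo_eq A H (hFsub S hS)
    _ = ∑ W ∈ A.powerset, ∑ S ∈ F.filter (fun S => A \ W ⊆ S),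
          -((-1 : ℝ) ^ (W ∩ S).card * H W) := by
        refine Finset.sum_comm' ?_
        intro S W
        simp only [mem_filter, mem_powerset, hF]
        constructor
        · rintro ⟨⟨hSA, hSprop⟩, hWA, hsd⟩
          refine ⟨⟨⟨hSA, hSprop⟩, ?_⟩, hWA⟩
          exact sdiff_le_comm.1 hsd
        · rintro ⟨⟨⟨hSA, hSprop⟩, hsd⟩, hWA⟩
          refine ⟨⟨hSA, hSprop⟩, hWA, sdiff_le_comm.1 hsd⟩
    _ = ∑ W ∈ A.powerset, (if W = U then H U else 0) := by
        refine Finset.sum_congr rfl fun W hW => ?_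
        rw [mem_powerset] at hW
        -- factor out H W
        have hfac : ∀ S, -((-1 : ℝ) ^ (W ∩ S).card * H W)
            = (-1 : ℝ) ^ (W ∩ S).card * (-(H W)) := fun S => by ring
        simp only [hfac]
        rw [← Finset.sum_mul]
        -- reindex the sum over S by T = S ∩ W
        have hbij : ∑ S ∈ F.filter (fun S => A \ W ⊆ S), (-1 : ℝ) ^ (W ∩ S).card
            = ∑ T ∈ W.powerset.filter
                (fun T => T ∪ (A \ W) ≠ ∅ ∧ (T ∪ (A \ W)) ∩ U ≠ ∅),
                (-1 : ℝ) ^ T.card := by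
          refine Finset.sum_bij' (fun S _ => S ∩ W) (fun T _ => T ∪ (A \ W)) ?_ ?_ ?_ ?_ ?_
          · intro S hS
            rw [mem_filter, hF, mem_filter, mem_powerset] at hS
            obtain ⟨⟨hSA, hSne, hSU⟩, hsd⟩ := hS
            rw [mem_filter, mem_powerset]
            have hkey : (S ∩ W) ∪ (A \ W) = S := aux_inter_union_sdiff hSA hsd
            exact ⟨inter_subset_right, by rw [hkey]; exact ⟨hSne, hSU⟩⟩
          · intro T hT
            rw [mem_filter, mem_powerset] at hT
            obtain ⟨hTW, hTne, hTU⟩ := hT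
            rw [mem_filter, hF, mem_filter, mem_powerset]
            exact ⟨⟨union_subset (hTW.trans hW) sdiff_subset, hTne, hTU⟩,
              subset_union_right⟩
          · intro S hS
            rw [mem_filter, hF, mem_filter, mem_powerset] at hS
            exact aux_inter_union_sdiff hS.1.1 hS.2
          · intro T hT
            rw [mem_filter, mem_powerset] at hT
            exact aux_union_inter hT.1
          · intro S hS
            rw [inter_comm]
        rw [hbij]
        by_cases hcase : (A \ W) ∩ U = ∅
        · -- U ⊆ W
          have hUW : U ⊆ W := by
            intro a ha
            by_contra haW
            have : a ∈ (A \ W) ∩ U := mem_inter.2 ⟨mem_sdiff.2 ⟨hU ha, haW⟩, ha⟩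
            rw [hcase] at this
            exact absurd this (notMem_empty a)
          have hfilter : W.powerset.filter
              (fun T => T ∪ (A \ W) ≠ ∅ ∧ (T ∪ (A \ W)) ∩ U ≠ ∅)
              = W.powerset.filter (fun T => T ∩ U ≠ ∅) := by
            refine Finset.filter_congr fun T hT => ?_
            rw [mem_powerset] at hT
            have h1 : (T ∪ (A \ W)) ∩ U = T ∩ U := by
              rw [union_inter_distrib_right, hcase, union_empty]
            rw [h1]
            constructor
            · exact fun h => h.2
            · intro h
              refine ⟨?_, h⟩
              intro habs
              apply h
              have : T = ∅ := by
                rw [← subset_empty, ← habs]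
                exact subset_union_left
              rw [this, empty_inter]
          rw [hfilter]
          have hsplit : ∑ T ∈ W.powerset.filter (fun T => T ∩ U ≠ ∅), (-1 : ℝ) ^ T.card
              = (∑ T ∈ W.powerset, (-1 : ℝ) ^ T.card)
                - ∑ T ∈ W.powerset.filter (fun T => ¬ T ∩ U ≠ ∅), (-1 : ℝ) ^ T.card := by
            rw [eq_sub_iff_add_eq, Finset.sum_filter_add_sum_filter_not]
          have hcompl : W.powerset.filter (fun T => ¬ T ∩ U ≠ ∅) = (W \ U).powerset := by
            ext T
            rw [mem_filter, mem_powerset, mem_powerset, not_ne_iff,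
              ← disjoint_iff_inter_eq_empty, subset_sdiff]
          rw [hsplit, hcompl, aux_neg_one_pow_sum, aux_neg_one_pow_sum]
          simp only [sdiff_eq_empty_iff_subset]
          by_cases hWU : W = U
          · subst hWU
            by_cases hWe : W = ∅
            · subst hWe
              simp [hH0]
            · simp [hWe]
          · have hWne : W ≠ ∅ := by
              intro h
              apply hWU
              rw [h, eq_comm, ← subset_empty, ← h]
              exact hUW
            have hWnU : ¬ W ⊆ U := fun h => hWU (subset_antisymm h hUW)
            simp [hWne, hWnU, hWU]
        · -- (A \ W) ∩ U ≠ ∅ : all conditions hold, W ≠ U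
          have hfilter : W.powerset.filter
              (fun T => T ∪ (A \ W) ≠ ∅ ∧ (T ∪ (A \ W)) ∩ U ≠ ∅) = W.powerset := by
            refine Finset.filter_true_of_mem fun T hT => ?_
            constructor
            · intro habs
              apply hcase
              have h0 : A \ W ⊆ T ∪ (A \ W) := subset_union_right
              rw [habs, subset_empty] at h0
              rw [h0, empty_inter]
            · intro habs
              apply hcase
              have h0 : (A \ W) ∩ U ⊆ (T ∪ (A \ W)) ∩ U :=
                inter_subset_inter subset_union_right (Subset.refl U)
              rw [habs, subset_empty] at h0
              exact h0
          rw [hfilter, aux_neg_one_pow_sum]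
          have hWU : W ≠ U := by
            intro h
            subst h
            apply hcase
            rw [← subset_empty]
            intro a ha
            rw [mem_inter, mem_sdiff] at ha
            exact absurd ha.2 ha.1.2
          by_cases hWe : W = ∅
          · subst hWe
            simp [hH0, hWU]
          · simp [hWe, hWU]
    _ = H U := by
        rw [Finset.sum_ite_eq' A.powerset U (fun _ => H U), if_pos (mem_powerset.2 hU)]
end

section
/- Let A be a finite set, H a real-valued function on subsets of A with H(∅) = 0, and σ a positive real scale for each a ∈ A. Define I(S) = −∑_{T ⊆ S} (−1)^{|T|} H(T ∪ (A∖S)) and s(S) = ∑_{a∈S} σ(a) for nonempty S ⊆ A, and the complexity profile C(y) = ∑_{S nonempty, s(S) ≥ y} I(S) for y ≥ 0. Then the area under the complexity profile equals the total scale-weighted information: ∫_0^∞ C(y) dy = ∑_{a∈A} σ(a)·H({a}). -/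
open Finset MeasureTheory

/-- The complexity profile: `C(y)` is the total shared information in dependencies of
scale `y` or higher, `C(y) = ∑_{S ⊆ A nonempty, s(S) ≥ y} I(S)`. -/
noncomputable def complexityProfile {α : Type*} [DecidableEq α]
    (A : Finset α) (H : Finset α → ℝ) (σ : α → ℝ) (y : ℝ) : ℝ :=
  ∑ S ∈ A.powerset.filter (fun S => S ≠ ∅ ∧ y ≤ ∑ a ∈ S, σ a), sharedInfo A H S

/- The area under a step profile `y ↦ ∑_{S, s(S) ≥ y} I(S)` is `∑_S s(S) I(S)`; distributing
`s(S) = ∑_{a ∈ S} σ(a)` turns this into `∑_a σ(a) ∑_{S ∋ a} I(S)`. Up to sign, `I` is the Möbius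
transform of `T ↦ H(A ∖ T)` on the Boolean lattice of subsets of `A`, so Möbius inversion gives
`∑_{T ⊆ S} I(T) = -H(A ∖ S)`, and hence `∑_{S ∋ a} I(S) = H({a}) - H(∅) = H({a})`. -/

theorem sum_Icc_neg_one_pow_card_sdiff {R : Type*} [Ring R] {α : Type*} [DecidableEq α]
    {U S : Finset α} (hUS : U ⊆ S) :
    ∑ T ∈ Icc U S, (-1 : R) ^ #(T \ U) = if U = S then 1 else 0 := by
  have hinj : Set.InjOn (U ∪ ·) (S \ U).powerset := by
    intro V hV W hW hVW
    simp only [coe_powerset, Set.mem_preimage, Set.mem_powerset_iff, coe_subset,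
      subset_sdiff] at hV hW
    simpa [union_sdiff_left, hV.2.sdiff_eq_left, hW.2.sdiff_eq_left] using
      congrArg (· \ U) hVW
  rw [Icc_eq_image_powerset hUS, sum_image hinj]
  calc ∑ V ∈ (S \ U).powerset, (-1 : R) ^ #((U ∪ V) \ U)
      = ∑ V ∈ (S \ U).powerset, (-1 : R) ^ #V := by
        refine sum_congr rfl fun V hV => ?_
        rw [union_sdiff_left, (subset_sdiff.mp (mem_powerset.mp hV)).2.sdiff_eq_left]
    _ = ((∑ V ∈ (S \ U).powerset, (-1 : ℤ) ^ #V : ℤ) : R) := by push_cast; rfl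
    _ = if U = S then 1 else 0 := by
        have hempty : S \ U = ∅ ↔ U = S := by
          rw [sdiff_eq_empty_iff_subset]
          exact ⟨Subset.antisymm hUS, fun h => h ▸ Subset.rfl⟩
        simp only [sum_powerset_neg_one_pow_card, hempty]
        split_ifs <;> simp

section SharedInfo

variable {α : Type*} [DecidableEq α] {A S : Finset α} (H : Finset α → ℝ)

theorem sharedInfo_eq_sum_powerset_sdiff (hSA : S ⊆ A) :
    sharedInfo A H S = -∑ U ∈ S.powerset, (-1 : ℝ) ^ #(S \ U) * H (A \ U) := by
  refine congrArg Neg.neg (sum_nbij' (S \ ·) (S \ ·) ?_ ?_ ?_ ?_ ?_) <;> simp only [mem_powerset]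
  · exact fun _ _ => sdiff_subset
  · exact fun _ _ => sdiff_subset
  · exact fun _ hT => Finset.sdiff_sdiff_eq_self hT
  · exact fun _ hU => Finset.sdiff_sdiff_eq_self hU
  · intro T hT
    rw [Finset.sdiff_sdiff_eq_self hT, sdiff_sdiff_right', inf_eq_right.mpr (hT.trans hSA),
      sup_comm, sup_eq_union]

theorem sum_powerset_sharedInfo (hSA : S ⊆ A) :
    ∑ T ∈ S.powerset, sharedInfo A H T = -H (A \ S) := by
  calc ∑ T ∈ S.powerset, sharedInfo A H T
      = -∑ T ∈ S.powerset, ∑ U ∈ T.powerset, (-1 : ℝ) ^ #(T \ U) * H (A \ U) := by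
        rw [← sum_neg_distrib]
        exact sum_congr rfl fun T hT =>
          sharedInfo_eq_sum_powerset_sdiff H ((mem_powerset.mp hT).trans hSA)
    _ = -∑ U ∈ S.powerset, (∑ T ∈ Icc U S, (-1 : ℝ) ^ #(T \ U)) * H (A \ U) := by
        simp_rw [sum_mul]
        congr 1
        refine sum_comm' fun T U => ?_
        simp only [mem_powerset, mem_Icc]
        exact ⟨fun ⟨hTS, hUT⟩ => ⟨⟨hUT, hTS⟩, hUT.trans hTS⟩, fun ⟨⟨hUT, hTS⟩, _⟩ => ⟨hTS, hUT⟩⟩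
    _ = -∑ U ∈ S.powerset, if U = S then H (A \ U) else 0 := by
        refine congrArg Neg.neg (sum_congr rfl fun U hU => ?_)
        rw [sum_Icc_neg_one_pow_card_sdiff (mem_powerset.mp hU), ite_mul, one_mul, zero_mul]
    _ = -H (A \ S) := by rw [sum_ite_eq', if_pos (mem_powerset_self S)]

theorem sum_filter_mem_sharedInfo (hH0 : H ∅ = 0) {a : α} (ha : a ∈ A) :
    ∑ S ∈ A.powerset with a ∈ S, sharedInfo A H S = H {a} := by
  have hnot : {S ∈ A.powerset | a ∉ S} = (A.erase a).powerset := by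
    ext S
    simp [subset_erase]
  have hsplit := sum_filter_add_sum_filter_not A.powerset (a ∈ ·) (sharedInfo A H)
  rw [hnot, sum_powerset_sharedInfo H Subset.rfl,
    sum_powerset_sharedInfo H (erase_subset a A), sdiff_self, sdiff_erase_self ha, bot_eq_empty, hH0] at hsplit
  linarith

end SharedInfo

theorem setIntegral_Ioi_sum_filter_le {ι E : Type*} [NormedAddCommGroup E] [NormedSpace ℝ E]
    [CompleteSpace E] (s : Finset ι) (c : ι → ℝ) (b : ι → E) (hc : ∀ i ∈ s, 0 ≤ c i) :
    ∫ y in Set.Ioi 0, ∑ i ∈ s with y ≤ c i, b i = ∑ i ∈ s, c i • b i := by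
  have hstep : ∀ i, (fun y => if y ≤ c i then b i else 0) = (Set.Iic (c i)).indicator
      (fun _ => b i) := fun i => rfl
  have hint : ∀ i ∈ s, IntegrableOn (fun y => if y ≤ c i then b i else 0) (Set.Ioi 0) := by
    intro i _
    rw [hstep, IntegrableOn, integrable_indicator_iff measurableSet_Iic, IntegrableOn,
      Measure.restrict_restrict measurableSet_Iic, Set.Iic_inter_Ioi]
    exact integrableOn_const measure_Ioc_lt_top.ne
  simp_rw [sum_filter]
  rw [integral_finsetSum s hint]
  refine sum_congr rfl fun i hi => ?_
  rw [hstep, setIntegral_indicator measurableSet_Iic, Set.Ioi_inter_Iic, setIntegral_const,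
    Real.volume_real_Ioc_of_le (hc i hi), sub_zero]

theorem complexityProfile_eq_sum_filter_le {α : Type*} [DecidableEq α]
    (A : Finset α) (H : Finset α → ℝ) (σ : α → ℝ) {y : ℝ} (hy : 0 < y) :
    complexityProfile A H σ y = ∑ S ∈ A.powerset with y ≤ ∑ a ∈ S, σ a, sharedInfo A H S := by
  refine sum_congr (filter_congr fun S _ => and_iff_right_of_imp fun hyS hS => ?_) fun _ _ => rfl
  simp only [hS, sum_empty] at hyS
  linarith

/-- Conservation law for the complexity profile: the area under `C` equals the total
scale-weighted information, `∫_0^∞ C(y) dy = ∑_{a∈A} σ(a)·H({a})`. -/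
theorem complexityProfile_integral {α : Type*} [DecidableEq α]
    (A : Finset α) (H : Finset α → ℝ) (σ : α → ℝ)
    (hH0 : H ∅ = 0) (hσ : ∀ a ∈ A, 0 < σ a) :
    ∫ y in Set.Ioi (0 : ℝ), complexityProfile A H σ y = ∑ a ∈ A, σ a * H {a} := by
  have hscale : ∀ S ∈ A.powerset, 0 ≤ ∑ a ∈ S, σ a := fun S hS =>
    sum_nonneg fun a ha => (hσ a (mem_powerset.mp hS ha)).le
  calc ∫ y in Set.Ioi (0 : ℝ), complexityProfile A H σ y
      = ∫ y in Set.Ioi (0 : ℝ), ∑ S ∈ A.powerset with y ≤ ∑ a ∈ S, σ a, sharedInfo A H S :=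
        setIntegral_congr_fun measurableSet_Ioi fun _ hy =>
          complexityProfile_eq_sum_filter_le A H σ hy
    _ = ∑ S ∈ A.powerset, ∑ a ∈ S, σ a * sharedInfo A H S := by
        simp_rw [setIntegral_Ioi_sum_filter_le _ _ _ hscale, smul_eq_mul, sum_mul]
    _ = ∑ a ∈ A, σ a * ∑ S ∈ A.powerset with a ∈ S, sharedInfo A H S := by
        simp_rw [mul_sum]
        refine sum_comm' fun S a => ?_
        simp only [mem_powerset, mem_filter]
        exact ⟨fun ⟨hSA, haS⟩ => ⟨⟨hSA, haS⟩, hSA haS⟩, fun ⟨h, _⟩ => h⟩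
    _ = ∑ a ∈ A, σ a * H {a} :=
        sum_congr rfl fun a ha => by rw [sum_filter_mem_sharedInfo H hH0 ha]
end

section
/- Let A be a finite set and H a nonnegative, strongly subadditive real-valued function on subsets of A, i.e. H(U ∪ V) ≤ H(U) + H(V) − H(U ∩ V) for all U, V ⊆ A. Suppose B and C are disjoint subsets of A that are independent, i.e. H(B ∪ C) = H(B) + H(C). Then for every pair of subsets U ⊆ B and V ⊆ C one has H(U ∪ V) = H(U) + H(V). -/
open Finset

/-- If `B` and `C` are disjoint independent subsets of `A` (for a nonnegative strongly
subadditive information function `H`), then every `U ⊆ B` and `V ⊆ C` are independent: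
`H(U ∪ V) = H(U) + H(V)`. -/
theorem independence_of_subsets {α : Type*} [DecidableEq α]
    (A B C : Finset α) (H : Finset α → ℝ)
    (hpos : ∀ U ⊆ A, 0 ≤ H U)
    (hssa : ∀ U ⊆ A, ∀ V ⊆ A, H (U ∪ V) ≤ H U + H V - H (U ∩ V))
    (hB : B ⊆ A) (hC : C ⊆ A) (hdisj : Disjoint B C)
    (hind : H (B ∪ C) = H B + H C) :
    ∀ U ⊆ B, ∀ V ⊆ C, H (U ∪ V) = H U + H V := by
  intro U hU V hV
  have hUA : U ⊆ A := hU.trans hB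
  have hVA : V ⊆ A := hV.trans hC
  have hUVA : U ∪ V ⊆ A := union_subset hUA hVA
  have hBVA : B ∪ V ⊆ A := union_subset hB hVA
  have h0 : 0 ≤ H (∅ : Finset α) := hpos _ (empty_subset A)
  have hUV0 : U ∩ V = ∅ :=
    disjoint_iff_inter_eq_empty.mp (hdisj.mono hU hV)
  have hle : H (U ∪ V) ≤ H U + H V := by
    have h := hssa U hUA V hVA
    rw [hUV0] at h
    linarith
  have h1 : (U ∪ V) ∪ B = B ∪ V := by
    ext x
    simp only [mem_union]
    constructor
    · rintro ((h | h) | h)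
      · exact Or.inl (hU h)
      · exact Or.inr h
      · exact Or.inl h
    · rintro (h | h)
      · exact Or.inr h
      · exact Or.inl (Or.inr h)
  have h2 : (U ∪ V) ∩ B = U := by
    ext x
    simp only [mem_inter, mem_union]
    constructor
    · rintro ⟨h | h, hb⟩
      · exact h
      · exact absurd (hV h) (Finset.disjoint_left.mp hdisj hb)
    · intro h
      exact ⟨Or.inl h, hU h⟩
  have h3 : (B ∪ V) ∪ C = B ∪ C := by
    ext x
    simp only [mem_union]
    constructor
    · rintro ((h | h) | h)
      · exact Or.inl h
      · exact Or.inr (hV h)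
      · exact Or.inr h
    · rintro (h | h)
      · exact Or.inl (Or.inl h)
      · exact Or.inr h
  have h4 : (B ∪ V) ∩ C = V := by
    ext x
    simp only [mem_inter, mem_union]
    constructor
    · rintro ⟨h | h, hc⟩
      · exact absurd hc (Finset.disjoint_left.mp hdisj h)
      · exact h
    · intro h
      exact ⟨Or.inr h, hV h⟩
  have ha := hssa (U ∪ V) hUVA B hB
  rw [h1, h2] at ha
  have hb2 := hssa (B ∪ V) hBVA C hC
  rw [h3, h4] at hb2
  linarith
end

section
/- Let A be a finite set and H a nonnegative, strongly subadditive real-valued function on subsets of A, i.e. H(U ∪ V) ≤ H(U) + H(V) − H(U ∩ V) for all U, V ⊆ A. Suppose B_1, …, B_k are pairwise disjoint subsets of A that are jointly independent, i.e. H(B_1 ∪ … ∪ B_k) = H(B_1) + … + H(B_k). Then for all subsets U_i ⊆ B_i (i = 1, …, k), H(U_1 ∪ … ∪ U_k) = H(U_1) + … + H(U_k). (Hereditary property of independence.) -/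
open Finset

/-- Hereditary property of independence: if `B_1, …, B_k` are pairwise disjoint,
jointly independent subsets of `A` (for a nonnegative strongly subadditive information
function `H`), then any choice of subsets `U_i ⊆ B_i` is jointly independent:
`H(U_1 ∪ … ∪ U_k) = H(U_1) + … + H(U_k)`. -/
theorem hereditary_independence {α : Type*} [DecidableEq α]
    (A : Finset α) (H : Finset α → ℝ) (k : ℕ) (B U : Fin k → Finset α)
    (hpos : ∀ U ⊆ A, 0 ≤ H U)
    (hssa : ∀ U ⊆ A, ∀ V ⊆ A, H (U ∪ V) ≤ H U + H V - H (U ∩ V))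
    (hB : ∀ i, B i ⊆ A)
    (hdisj : ∀ i j, i ≠ j → Disjoint (B i) (B j))
    (hind : H (Finset.univ.biUnion B) = ∑ i, H (B i))
    (hU : ∀ i, U i ⊆ B i) :
    H (Finset.univ.biUnion U) = ∑ i, H (U i) := by
  classical
  have hUA : ∀ i, U i ⊆ A := fun i => (hU i).trans (hB i)
  have hnd : ∀ i j : Fin k, i ≠ j → ∀ x, x ∈ B i → x ∉ B j :=
    fun i j h x hx => Finset.disjoint_left.mp (hdisj i j h) hx
  set T : Finset (Fin k) → Finset α :=
    fun s => s.biUnion U ∪ (univ \ s).biUnion B with hTdef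
  have hTA : ∀ s, T s ⊆ A := by
    intro s
    apply Finset.union_subset
    · exact Finset.biUnion_subset.mpr fun i _ => hUA i
    · exact Finset.biUnion_subset.mpr fun i _ => hB i
  -- lower bound by exchanging B i for U i one at a time
  have key : ∀ s : Finset (Fin k),
      H (T ∅) + ∑ i ∈ s, H (U i) ≤ H (T s) + ∑ i ∈ s, H (B i) := by
    intro s
    induction s using Finset.induction_on with
    | empty => simp
    | @insert a s ha ih =>
      have e1 : T (insert a s) ∪ B a = T s := by
        ext x
        simp only [hTdef, Finset.mem_union, Finset.mem_biUnion, Finset.mem_sdiff,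
          Finset.mem_univ, true_and, Finset.mem_insert]
        constructor
        · rintro ((⟨i, (rfl | hi), hx⟩ | ⟨i, hi, hx⟩) | hx)
          · exact Or.inr ⟨i, ha, hU i hx⟩
          · exact Or.inl ⟨i, hi, hx⟩
          · exact Or.inr ⟨i, fun h => hi (Or.inr h), hx⟩
          · exact Or.inr ⟨a, ha, hx⟩
        · rintro (⟨i, hi, hx⟩ | ⟨i, hi, hx⟩)
          · exact Or.inl (Or.inl ⟨i, Or.inr hi, hx⟩)
          · by_cases hia : i = a
            · exact Or.inr (hia ▸ hx)
            · exact Or.inl (Or.inr ⟨i, by tauto, hx⟩)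
      have e2 : T (insert a s) ∩ B a = U a := by
        ext x
        simp only [hTdef, Finset.mem_inter, Finset.mem_union, Finset.mem_biUnion,
          Finset.mem_sdiff, Finset.mem_univ, true_and, Finset.mem_insert]
        constructor
        · rintro ⟨(⟨i, (rfl | hi), hx⟩ | ⟨i, hi, hx⟩), hxa⟩
          · exact hx
          · exact absurd hxa (hnd i a (fun h => ha (h ▸ hi)) x (hU i hx))
          · exact absurd hxa (hnd i a (fun h => hi (Or.inl h)) x hx)
        · intro hx
          exact ⟨Or.inl ⟨a, Or.inl rfl, hx⟩, hU a hx⟩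
      have step := hssa (T (insert a s)) (hTA _) (B a) (hB a)
      rw [e1, e2] at step
      have : H (T s) + H (U a) ≤ H (T (insert a s)) + H (B a) := by linarith
      rw [Finset.sum_insert ha, Finset.sum_insert ha]
      linarith
  have hT0 : T ∅ = Finset.univ.biUnion B := by simp [hTdef]
  have hTu : T Finset.univ = Finset.univ.biUnion U := by simp [hTdef]
  have lower : ∑ i, H (U i) ≤ H (Finset.univ.biUnion U) := by
    have := key Finset.univ
    rw [hT0, hTu, hind] at this
    linarith
  -- upper bound by subadditivity
  rcases eq_or_ne k 0 with rfl | hk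
  · have : (Finset.univ : Finset (Fin 0)) = ∅ := rfl
    simp only [this, Finset.biUnion_empty, Finset.sum_empty] at hind ⊢
    · exact hind
  · have hUU : ∀ i j : Fin k, i ≠ j → Disjoint (U i) (U j) :=
      fun i j h => (hdisj i j h).mono (hU i) (hU j)
    have upper : ∀ s : Finset (Fin k), s.Nonempty →
        H (s.biUnion U) ≤ ∑ i ∈ s, H (U i) := by
      intro s hs
      induction hs using Finset.Nonempty.cons_induction with
      | singleton a => simp
      | cons a s ha hs ih =>
        have hsub : s.biUnion U ⊆ A := Finset.biUnion_subset.mpr fun i _ => hUA i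
        have step := hssa (U a) (hUA a) (s.biUnion U) hsub
        have hint : U a ∩ s.biUnion U = ∅ := by
          rw [← Finset.disjoint_iff_inter_eq_empty]
          exact Finset.disjoint_biUnion_right _ _ _ |>.mpr
            fun i hi => hUU a i (fun h => ha (h ▸ hi))
        rw [hint] at step
        have hpos0 : 0 ≤ H ∅ := hpos ∅ (Finset.empty_subset A)
        rw [Finset.sum_cons, Finset.cons_eq_insert, Finset.biUnion_insert]
        linarith
    haveI : Nonempty (Fin k) := ⟨⟨0, Nat.pos_of_ne_zero hk⟩⟩
    have := upper Finset.univ Finset.univ_nonempty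
    linarith
end

section
/- Let A be a finite set with |A| = N and H a real-valued function on subsets of A with H(∅) = 0, and give every component unit scale. Define I(S) = −∑_{T ⊆ S} (−1)^{|T|} H(T ∪ (A∖S)) for nonempty S ⊆ A, the complexity profile C(k) = ∑_{S nonempty, |S| ≥ k} I(S), and Q(j) = ∑_{U ⊆ A, |U| = j} H(U). Then for every integer k with 1 ≤ k ≤ N, C(k) = ∑_{j = N−k}^{N−1} (−1)^{j+k−N} · binom(j, j+k−N) · Q(j+1). -/
open Finset

lemma alt_sum_range (u : ℕ) (hu : 1 ≤ u) (m : ℕ) :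
    ∑ t ∈ Finset.range (m+1), (-1:ℝ)^t * u.choose t = (-1)^m * (u-1).choose m := by
  induction m with
  | zero => simp
  | succ m ih =>
    rw [Finset.sum_range_succ, ih]
    have h : u.choose (m+1) = (u-1).choose m + (u-1).choose (m+1) := by
      obtain ⟨n, rfl⟩ : ∃ n, u = n + 1 := ⟨u - 1, by omega⟩
      simp [Nat.choose_succ_succ]
    rw [h]
    push_cast
    ring

lemma alt_total (u : ℕ) (hu : 1 ≤ u) :
    ∑ t ∈ Finset.Icc 0 u, (-1:ℝ)^t * u.choose t = 0 := by
  have h : Finset.Icc 0 u = Finset.range (u+1) := by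
    ext x; simp [Finset.mem_range, Finset.mem_Icc]
  rw [h, alt_sum_range u hu u]
  simp [Nat.choose_eq_zero_of_lt (by omega : u - 1 < u)]

lemma alt_sum_Icc (u m : ℕ) (hu : 1 ≤ u) (hm : 1 ≤ m) :
    ∑ t ∈ Finset.Icc m u, (-1:ℝ)^t * u.choose t = (-1)^m * (u-1).choose (m-1) := by
  rcases le_or_gt m u with h | h
  · have key := alt_total u hu
    have hsplit : Finset.Icc 0 u = Finset.range m ∪ Finset.Icc m u := by
      ext x; simp [Finset.mem_range, Finset.mem_Icc]; omega
    have hdisj : Disjoint (Finset.range m) (Finset.Icc m u) := by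
      simp [Finset.disjoint_left, Finset.mem_range, Finset.mem_Icc]; omega
    rw [hsplit, Finset.sum_union hdisj] at key
    have hr : (m - 1) + 1 = m := by omega
    rw [← hr, alt_sum_range u hu (m-1)] at key
    have hpow : (-1:ℝ)^(m-1) = -(-1:ℝ)^m := by
      conv_rhs => rw [← hr, pow_succ]
      ring
    rw [hpow, hr] at key
    linarith
  · rw [Finset.Icc_eq_empty (by omega)]
    simp [Nat.choose_eq_zero_of_lt (by omega : u - 1 < m - 1)]

lemma set_eq1 {α : Type*} [DecidableEq α] {A S T : Finset α} (hTS : T ⊆ S) (hSA : S ⊆ A) :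
    (A \ (T ∪ (A \ S))) ∪ T = S := by
  ext a
  have h1 := @hTS a; have h2 := @hSA a
  simp only [Finset.mem_union, Finset.mem_sdiff]
  tauto

lemma set_eq2 {α : Type*} [DecidableEq α] {A U T : Finset α} (hTU : T ⊆ U) (hUA : U ⊆ A) :
    T ∪ (A \ ((A \ U) ∪ T)) = U := by
  ext a
  have h1 := @hTU a; have h2 := @hUA a
  simp only [Finset.mem_union, Finset.mem_sdiff]
  tauto

lemma card_eq1 {α : Type*} [DecidableEq α] {A S T : Finset α} (hTS : T ⊆ S) (hSA : S ⊆ A) :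
    (T ∪ (A \ S)).card = T.card + (A.card - S.card) := by
  rw [Finset.card_union_of_disjoint ((Finset.sdiff_disjoint.mono_right hTS).symm),
    Finset.card_sdiff_of_subset hSA]

lemma signsum {α : Type*} [DecidableEq α] (U : Finset α) (m : ℕ) :
    ∑ T ∈ U.powerset.filter (fun T => m ≤ T.card), (-1:ℝ)^T.card
      = ∑ t ∈ Finset.Icc m U.card, (-1:ℝ)^t * (U.card.choose t) := by
  rw [Finset.sum_filter, Finset.sum_powerset]
  have hIcc : Finset.Icc m U.card = (Finset.range (U.card + 1)).filter (fun t => m ≤ t) := by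
    ext x; simp [Finset.mem_range, Finset.mem_Icc]; omega
  rw [hIcc, Finset.sum_filter]
  apply Finset.sum_congr rfl
  intro t ht
  have : ∀ T ∈ Finset.powersetCard t U, (if m ≤ T.card then (-1:ℝ)^T.card else 0)
      = (if m ≤ t then (-1:ℝ)^t * 1 else 0) := by
    intro T hT
    rw [Finset.mem_powersetCard] at hT
    rw [hT.2]; ring_nf
  rw [Finset.sum_congr rfl this, Finset.sum_const, Finset.card_powersetCard]
  split <;> simp <;> ring

/-- Combinatorial formula for the complexity profile (unit-scale components):
`C(k) = ∑_{j = N−k}^{N−1} (−1)^{j+k−N} · binom(j, j+k−N) · Q(j+1)`, where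
`C(k) = ∑_{S nonempty, |S| ≥ k} I(S)` and `Q(j) = ∑_{U ⊆ A, |U| = j} H(U)`. -/
theorem complexityProfile_combinatorial_formula {α : Type*} [DecidableEq α]
    (A : Finset α) (H : Finset α → ℝ) (N : ℕ) (hN : A.card = N)
    (hH0 : H ∅ = 0) :
    ∀ k : ℕ, 1 ≤ k → k ≤ N →
      ∑ S ∈ A.powerset.filter (fun S => S ≠ ∅ ∧ k ≤ S.card), sharedInfo A H S
        = ∑ j ∈ Finset.Icc (N - k) (N - 1),
            (-1 : ℝ) ^ (j + k - N) * (j.choose (j + k - N)) *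
              ∑ U ∈ A.powerset.filter (fun U => U.card = j + 1), H U := by
  intro k hk hkN
  -- drop the nonemptiness condition
  have hfe : A.powerset.filter (fun S => S ≠ ∅ ∧ k ≤ S.card)
      = A.powerset.filter (fun S => k ≤ S.card) := by
    apply Finset.filter_congr
    intro S hS
    simp only [ne_eq, iff_iff_implies_and_implies]
    constructor
    · rintro ⟨_, h⟩; exact h
    · intro h
      refine ⟨fun hS0 => ?_, h⟩
      rw [hS0] at h; simp at h; omega
  rw [hfe]
  simp only [sharedInfo]
  rw [Finset.sum_neg_distrib]
  -- reindex the double sum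
  have step1 : ∑ S ∈ A.powerset.filter (fun S => k ≤ S.card),
        ∑ T ∈ S.powerset, (-1:ℝ)^T.card * H (T ∪ (A \ S))
      = ∑ p ∈ (A.powerset ×ˢ A.powerset).filter
          (fun p => p.2 ⊆ p.1 ∧ k ≤ p.1.card),
          (-1:ℝ)^p.2.card * H (p.2 ∪ (A \ p.1)) := by
    rw [Finset.sum_filter]
    conv_rhs => rw [Finset.sum_filter, Finset.sum_product]
    apply Finset.sum_congr rfl
    intro S hS
    rw [Finset.mem_powerset] at hS
    by_cases h : k ≤ S.card
    · rw [if_pos h]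
      rw [← Finset.sum_filter]
      apply Finset.sum_congr ?_ (fun _ _ => rfl)
      ext T
      simp only [Finset.mem_filter, Finset.mem_powerset]
      constructor
      · intro hT; exact ⟨hT.trans hS, hT, h⟩
      · rintro ⟨_, hT, _⟩; exact hT
    · rw [if_neg h]
      symm
      apply Finset.sum_eq_zero
      intro T _
      rw [if_neg (by tauto)]
  have step2 : ∑ p ∈ (A.powerset ×ˢ A.powerset).filter
          (fun p => p.2 ⊆ p.1 ∧ k ≤ p.1.card),
          (-1:ℝ)^p.2.card * H (p.2 ∪ (A \ p.1))
      = ∑ q ∈ (A.powerset ×ˢ A.powerset).filter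
          (fun q => q.2 ⊆ q.1 ∧ k ≤ N - q.1.card + q.2.card),
          (-1:ℝ)^q.2.card * H q.1 := by
    apply Finset.sum_nbij' (i := fun p => (p.2 ∪ (A \ p.1), p.2))
      (j := fun q => ((A \ q.1) ∪ q.2, q.2))
    · rintro ⟨S, T⟩ hp
      simp only [Finset.mem_filter, Finset.mem_product, Finset.mem_powerset] at hp ⊢
      obtain ⟨⟨hSA, hTA⟩, hTS, hkS⟩ := hp
      have hcard := card_eq1 hTS hSA
      have hT_le : T.card ≤ S.card := Finset.card_le_card hTS
      have hS_le : S.card ≤ A.card := Finset.card_le_card hSA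
      refine ⟨⟨Finset.union_subset (hTS.trans hSA) (Finset.sdiff_subset), hTA⟩,
        Finset.subset_union_left, ?_⟩
      rw [hcard, hN]
      rw [hN] at hS_le
      omega
    · rintro ⟨U, T⟩ hq
      simp only [Finset.mem_filter, Finset.mem_product, Finset.mem_powerset] at hq ⊢
      obtain ⟨⟨hUA, hTA⟩, hTU, hkU⟩ := hq
      have hdisj : Disjoint (A \ U) T := Finset.sdiff_disjoint.mono_right hTU
      have hcard : ((A \ U) ∪ T).card = (A.card - U.card) + T.card := by
        rw [Finset.card_union_of_disjoint hdisj, Finset.card_sdiff_of_subset hUA]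
      have hU_le : U.card ≤ A.card := Finset.card_le_card hUA
      refine ⟨⟨Finset.union_subset (Finset.sdiff_subset) hTA, hTA⟩,
        Finset.subset_union_right, ?_⟩
      rw [hcard, hN]
      rw [hN] at hU_le
      omega
    · rintro ⟨S, T⟩ hp
      simp only [Finset.mem_filter, Finset.mem_product, Finset.mem_powerset] at hp
      obtain ⟨⟨hSA, hTA⟩, hTS, hkS⟩ := hp
      simp only [Prod.mk.injEq]
      exact ⟨set_eq1 hTS hSA, trivial⟩
    · rintro ⟨U, T⟩ hq
      simp only [Finset.mem_filter, Finset.mem_product, Finset.mem_powerset] at hq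
      obtain ⟨⟨hUA, hTA⟩, hTU, hkU⟩ := hq
      simp only [Prod.mk.injEq]
      exact ⟨set_eq2 hTU hUA, trivial⟩
    · rintro ⟨S, T⟩ hp
      rfl
  have step3 : ∑ q ∈ (A.powerset ×ˢ A.powerset).filter
          (fun q => q.2 ⊆ q.1 ∧ k ≤ N - q.1.card + q.2.card),
          (-1:ℝ)^q.2.card * H q.1
      = ∑ U ∈ A.powerset,
          (∑ T ∈ U.powerset.filter (fun T => k ≤ N - U.card + T.card), (-1:ℝ)^T.card) * H U := by
    rw [Finset.sum_filter, Finset.sum_product]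
    apply Finset.sum_congr rfl
    intro U hU
    rw [Finset.mem_powerset] at hU
    rw [Finset.sum_mul, Finset.sum_filter, ← Finset.sum_filter, ← Finset.sum_filter]
    apply Finset.sum_congr ?_ (fun _ _ => rfl)
    ext T
    simp only [Finset.mem_filter, Finset.mem_powerset]
    constructor
    · rintro ⟨_, hTU, hc⟩; exact ⟨hTU, hc⟩
    · rintro ⟨hTU, hc⟩; exact ⟨hTU.trans hU, hTU, hc⟩
  have step4 : ∀ U ∈ A.powerset,
      (∑ T ∈ U.powerset.filter (fun T => k ≤ N - U.card + T.card), (-1:ℝ)^T.card) * H U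
      = -(∑ j ∈ Finset.Icc (N - k) (N - 1),
          if U.card = j + 1 then
            ((-1:ℝ)^(j+k-N) * (j.choose (j+k-N))) * H U else 0) := by
    intro U hU
    rw [Finset.mem_powerset] at hU
    have hu_le : U.card ≤ N := by rw [← hN]; exact Finset.card_le_card hU
    set u := U.card with hu
    have hfc : U.powerset.filter (fun T => k ≤ N - u + T.card)
        = U.powerset.filter (fun T => (u + k - N) ≤ T.card) := by
      apply Finset.filter_congr
      intro T _
      omega
    rw [hfc, signsum]
    rcases Nat.eq_zero_or_pos u with h0 | hpos
    · have hUe : U = ∅ := Finset.card_eq_zero.mp (by omega)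
      rw [hUe, hH0, mul_zero]
      symm
      rw [neg_eq_zero]
      apply Finset.sum_eq_zero
      intro j hj
      rw [if_neg]
      rw [hUe] at hu
      simp only [Finset.card_empty] at hu
      omega
    · rcases le_or_gt (u + k) N with hle | hgt
      · have hm0 : u + k - N = 0 := by omega
        rw [hm0, alt_total u hpos, zero_mul]
        symm
        rw [neg_eq_zero]
        apply Finset.sum_eq_zero
        intro j hj
        rw [Finset.mem_Icc] at hj
        rw [if_neg (by omega)]
      · have hm1 : 1 ≤ u + k - N := by omega
        rw [alt_sum_Icc u (u + k - N) hpos hm1]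
        have hmem : u - 1 ∈ Finset.Icc (N - k) (N - 1) := by
          rw [Finset.mem_Icc]; omega
        rw [Finset.sum_eq_single_of_mem (u - 1) hmem
          (fun j hj hne => by rw [if_neg (by omega)])]
        rw [if_pos (by omega)]
        have he : (u - 1) + k - N = (u + k - N) - 1 := by omega
        rw [he]
        have hpow : (-1:ℝ)^((u + k - N) - 1) = -(-1:ℝ)^(u + k - N) := by
          conv_rhs => rw [show u + k - N = ((u + k - N) - 1) + 1 by omega, pow_succ]
          ring
        rw [hpow]
        ring
  rw [step1, step2, step3, Finset.sum_congr rfl step4]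
  rw [Finset.sum_neg_distrib, neg_neg, Finset.sum_comm]
  apply Finset.sum_congr rfl
  intro j hj
  rw [Finset.mul_sum, Finset.sum_filter]
end

section
/- Let A be a finite set with |A| = N and H a real-valued function on subsets of A possessing exchange symmetry: there is h : ℕ → ℝ with h(0) = 0 such that H(U) = h(|U|) for all U ⊆ A. Define I(S) = −∑_{T ⊆ S} (−1)^{|T|} H(T ∪ (A∖S)) for nonempty S ⊆ A, and for 1 ≤ k ≤ N let D(k) = ∑_{S, |S| = k} I(S) be the information at scale exactly k. Then D(k) = binom(N,k) · ∑_{l=0}^{k} (−1)^{l+1} binom(k,l) h(l + N − k); that is, D(k) equals binom(N,k)·(−1)^k times the k-th finite difference of the sequence j ↦ h(j) evaluated starting at N−k. -/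
open Finset

/-- For a system with exchange symmetry (`H(U) = h(|U|)`), the information at scale
exactly `k`, `D(k) = ∑_{|S| = k} I(S)`, is given by
`D(k) = binom(N,k) · ∑_{l=0}^{k} (−1)^{l+1} binom(k,l) h(l + N − k)`,
i.e. `binom(N,k)·(−1)^k` times the `k`-th finite difference of `h` starting at `N−k`. -/
theorem scaleInfo_exchange_symmetric {α : Type*} [DecidableEq α]
    (A : Finset α) (H : Finset α → ℝ) (h : ℕ → ℝ) (N : ℕ)
    (hN : A.card = N) (h0 : h 0 = 0)
    (hsym : ∀ U ⊆ A, H U = h U.card) :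
    ∀ k : ℕ, 1 ≤ k → k ≤ N →
      ∑ S ∈ A.powerset.filter (fun S => S.card = k), sharedInfo A H S
        = (N.choose k : ℝ) *
            ∑ l ∈ Finset.range (k + 1),
              (-1 : ℝ) ^ (l + 1) * (k.choose l : ℝ) * h (l + N - k) := by
  intro k hk1 hkN
  have key : ∀ S ∈ A.powerset.filter (fun S => S.card = k),
      sharedInfo A H S
        = ∑ l ∈ Finset.range (k + 1),
            (-1 : ℝ) ^ (l + 1) * (k.choose l : ℝ) * h (l + N - k) := by
    intro S hS
    simp only [mem_filter, mem_powerset] at hS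
    obtain ⟨hSA, hSk⟩ := hS
    have hterm : ∀ T ∈ S.powerset,
        (-1 : ℝ) ^ T.card * H (T ∪ (A \ S)) = (-1 : ℝ) ^ T.card * h (T.card + N - k) := by
      intro T hT
      rw [mem_powerset] at hT
      have hTA : T ∪ (A \ S) ⊆ A := union_subset (hT.trans hSA) (sdiff_subset)
      have hdisj : Disjoint T (A \ S) := disjoint_sdiff.mono_left hT
      have hcard : (T ∪ (A \ S)).card = T.card + N - k := by
        rw [card_union_of_disjoint hdisj, card_sdiff_of_subset hSA, hN, hSk]
        omega
      rw [hsym _ hTA, hcard]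
    rw [sharedInfo, Finset.sum_congr rfl hterm]
    have := Finset.sum_powerset_apply_card
      (fun m => (-1 : ℝ) ^ m * h (m + N - k)) (x := S)
    rw [hSk] at this
    rw [this, ← Finset.sum_neg_distrib]
    refine Finset.sum_congr rfl fun l _ => ?_
    simp [pow_succ]
    ring
  rw [Finset.sum_congr rfl key, Finset.sum_const, ← Finset.powersetCard_eq_filter,
    Finset.card_powersetCard, hN, nsmul_eq_mul]
end

section
/- Let A be a finite set, H a monotone (U ⊆ V ⟹ H(U) ≤ H(V)), strongly subadditive (H(U ∪ V) ≤ H(U) + H(V) − H(U ∩ V)) real-valued function on subsets of A with H(∅) = 0, and σ a positive real scale for each a ∈ A. Define the maximal utility of information U(y) as the supremum of ∑_{a∈A} σ(a) J({a}) over all descriptor profiles J with J(A) ≤ y. Then: (a) for every y ≥ 0, U(y) ≤ ∑_{a∈A} σ(a) H({a}); and (b) for every y ≥ H(A), U(y) = ∑_{a∈A} σ(a) H({a}). (Conservation law: the total attainable utility equals the total scale-weighted information.) -/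
open Finset

/-- A descriptor profile for the system on component set `A` with information function
`H`: an assignment `J` of the amount of information a descriptor imparts about each
subset of `A`, subject to constraints (i)–(iii) derived from the axioms of
information functions. -/
def IsDescriptor {α : Type*} [DecidableEq α]
    (A : Finset α) (H : Finset α → ℝ) (J : Finset α → ℝ) : Prop :=
  (∀ V ⊆ A, 0 ≤ J V ∧ J V ≤ H V) ∧
  (∀ W V : Finset α, W ⊆ V → V ⊆ A →
    0 ≤ J V - J W ∧ J V - J W ≤ H V - H W) ∧
  (∀ V ⊆ A, ∀ W ⊆ A,
    J V + J W - J (V ∪ W) - J (V ∩ W) ≤ H V + H W - H (V ∪ W) - H (V ∩ W))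

/-- The maximal utility of information `U(y)`: the supremum of the scale-weighted
utility `∑_{a∈A} σ(a) J({a})` over all descriptor profiles `J` with `J(A) ≤ y`. -/
noncomputable def maxUtility {α : Type*} [DecidableEq α]
    (A : Finset α) (H : Finset α → ℝ) (σ : α → ℝ) (y : ℝ) : ℝ :=
  sSup {u : ℝ | ∃ J : Finset α → ℝ,
    IsDescriptor A H J ∧ J A ≤ y ∧ u = ∑ a ∈ A, σ a * J {a}}

/-- Conservation law for the maximal utility of information: (a) the utility never
exceeds the total scale-weighted information `∑_{a∈A} σ(a) H({a})`, and (b) it attains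
that total for every `y ≥ H(A)`. -/
theorem maxUtility_conservation {α : Type*} [DecidableEq α]
    (A : Finset α) (H : Finset α → ℝ) (σ : α → ℝ)
    (hH0 : H ∅ = 0)
    (hmono : ∀ U V : Finset α, U ⊆ V → V ⊆ A → H U ≤ H V)
    (hssa : ∀ U ⊆ A, ∀ V ⊆ A, H (U ∪ V) ≤ H U + H V - H (U ∩ V))
    (hσ : ∀ a ∈ A, 0 < σ a) :
    (∀ y : ℝ, 0 ≤ y → maxUtility A H σ y ≤ ∑ a ∈ A, σ a * H {a}) ∧
    (∀ y : ℝ, H A ≤ y → maxUtility A H σ y = ∑ a ∈ A, σ a * H {a}) := by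
  have hHnn : ∀ V ⊆ A, (0:ℝ) ≤ H V := by
    intro V hV
    have := hmono ∅ V (Finset.empty_subset V) hV
    linarith
  have hT0 : (0:ℝ) ≤ ∑ a ∈ A, σ a * H {a} := by
    apply Finset.sum_nonneg
    intro a ha
    exact mul_nonneg (le_of_lt (hσ a ha)) (hHnn {a} (Finset.singleton_subset_iff.mpr ha))
  have hmem : ∀ y : ℝ, ∀ u ∈ {u : ℝ | ∃ J : Finset α → ℝ,
      IsDescriptor A H J ∧ J A ≤ y ∧ u = ∑ a ∈ A, σ a * J {a}},
      u ≤ ∑ a ∈ A, σ a * H {a} := by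
    rintro y u ⟨J, ⟨hJ1, _, _⟩, hJA, rfl⟩
    apply Finset.sum_le_sum
    intro a ha
    exact mul_le_mul_of_nonneg_left (hJ1 {a} (Finset.singleton_subset_iff.mpr ha)).2
      (le_of_lt (hσ a ha))
  have hub : ∀ y : ℝ, maxUtility A H σ y ≤ ∑ a ∈ A, σ a * H {a} := fun y =>
    Real.sSup_le (hmem y) hT0
  refine ⟨fun y _ => hub y, fun y hy => le_antisymm (hub y) ?_⟩
  apply le_csSup ⟨_, hmem y⟩
  refine ⟨H, ⟨fun V hV => ⟨hHnn V hV, le_refl _⟩,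
    fun W V hWV hVA => ⟨by linarith [hmono W V hWV hVA], le_refl _⟩,
    fun V _ W _ => le_refl _⟩, hy, rfl⟩
end

section
/- Let A be a finite set, H a nonnegative, strongly subadditive real-valued function on subsets of A with H(∅) = 0, and suppose A is the disjoint union of B and C with H(A) = H(B) + H(C). If J : subsets of A → ℝ satisfies descriptor constraints (i) (0 ≤ J(V) ≤ H(V)) and (iii) (J(V) + J(W) − J(V ∪ W) − J(V ∩ W) ≤ H(V) + H(W) − H(V ∪ W) − H(V ∩ W) for all V, W ⊆ A), then for every subset V ⊆ A, J(V) ≥ J(V ∩ B) + J(V ∩ C). -/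
open Finset

/-- Superadditivity of a descriptor across independent subsystems: if `A` is the
disjoint union of independent `B` and `C`, and `J` satisfies descriptor constraints
(i) and (iii), then `J(V) ≥ J(V ∩ B) + J(V ∩ C)` for every `V ⊆ A`. -/
theorem descriptor_superadditive {α : Type*} [DecidableEq α]
    (A B C : Finset α) (H J : Finset α → ℝ)
    (hpos : ∀ U ⊆ A, 0 ≤ H U) (hH0 : H ∅ = 0)
    (hssa : ∀ U ⊆ A, ∀ V ⊆ A, H (U ∪ V) ≤ H U + H V - H (U ∩ V))
    (hdisj : Disjoint B C) (hunion : A = B ∪ C)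
    (hind : H A = H B + H C)
    (hJ1 : ∀ V ⊆ A, 0 ≤ J V ∧ J V ≤ H V)
    (hJ3 : ∀ V ⊆ A, ∀ W ⊆ A,
      J V + J W - J (V ∪ W) - J (V ∩ W) ≤ H V + H W - H (V ∪ W) - H (V ∩ W)) :
    ∀ V ⊆ A, J (V ∩ B) + J (V ∩ C) ≤ J V := by
  intro V hV
  have hBA : B ⊆ A := hunion ▸ subset_union_left
  have hCA : C ⊆ A := hunion ▸ subset_union_right
  have hVB : V ∩ B ⊆ A := (inter_subset_left).trans hV
  have hVC : V ∩ C ⊆ A := (inter_subset_left).trans hV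
  have hVBC : V ∩ B ∪ C ⊆ A := union_subset hVB hCA
  -- set identities
  have e1 : (V ∩ B) ∪ (V ∩ C) = V := by
    rw [← inter_union_distrib_left, ← hunion, inter_eq_left.mpr hV]
  have e2 : (V ∩ B) ∩ (V ∩ C) = ∅ := by
    ext x; simp only [mem_inter, notMem_empty, iff_false]
    rintro ⟨⟨-, hb⟩, -, hc⟩
    exact (Finset.disjoint_left.mp hdisj hb) hc
  have e3 : (V ∩ B ∪ C) ∪ B = A := by
    rw [hunion]; ext x; simp only [mem_union, mem_inter]; tauto
  have e4 : (V ∩ B ∪ C) ∩ B = V ∩ B := by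
    ext x
    simp only [mem_inter, mem_union]
    constructor
    · rintro ⟨h1 | hc, hb⟩
      · exact h1
      · exact absurd hb (Finset.disjoint_right.mp hdisj hc)
    · exact fun h => ⟨Or.inl h, h.2⟩
  have e5 : V ∪ C = V ∩ B ∪ C := by
    ext x
    simp only [mem_union, mem_inter]
    constructor
    · rintro (hv | hc)
      · rcases mem_union.mp (hunion ▸ hV hv) with hb | hc
        · exact Or.inl ⟨hv, hb⟩
        · exact Or.inr hc
      · exact Or.inr hc
    · rintro (⟨hv, -⟩ | hc)
      · exact Or.inl hv
      · exact Or.inr hc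
  have e6 : V ∩ C = V ∩ C := rfl
  -- H superadditivity: H(V∩B) + H(V∩C) ≤ H V
  have h1 := hssa _ hVBC _ hBA
  rw [e3, e4] at h1
  have h2 := hssa _ hV _ hCA
  rw [e5] at h2
  have hHsup : H (V ∩ B) + H (V ∩ C) ≤ H V := by linarith
  -- J(∅) = 0
  have hJe := hJ1 ∅ (empty_subset A)
  have hJ0 : J ∅ = 0 := le_antisymm (hH0 ▸ hJe.2) hJe.1
  have h3 := hJ3 _ hVB _ hVC
  rw [e1, e2, hJ0, hH0] at h3
  linarith
end

section
/- Let A be a finite set, H a nonnegative, strongly subadditive real-valued function on subsets of A with H(∅) = 0, and suppose A is the disjoint union of B and C with H(A) = H(B) + H(C). Let J be a descriptor profile (satisfying constraints (i)–(iii)). If W ⊆ V ⊆ A and J(V) = J(V ∩ B) + J(V ∩ C), then also J(W) = J(W ∩ B) + J(W ∩ C). -/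
open Finset

/-- If `A` is the disjoint union of independent `B` and `C`, `J` is a descriptor
profile, `W ⊆ V ⊆ A`, and `J` is additive across the `B`/`C` split on `V`, then `J` is
also additive across the split on `W`. -/
theorem descriptor_additive_on_subsets {α : Type*} [DecidableEq α]
    (A B C : Finset α) (H J : Finset α → ℝ)
    (hpos : ∀ U ⊆ A, 0 ≤ H U) (hH0 : H ∅ = 0)
    (hssa : ∀ U ⊆ A, ∀ V ⊆ A, H (U ∪ V) ≤ H U + H V - H (U ∩ V))
    (hdisj : Disjoint B C) (hunion : A = B ∪ C)
    (hind : H A = H B + H C)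
    (hJ : IsDescriptor A H J)
    (W V : Finset α) (hWV : W ⊆ V) (hVA : V ⊆ A)
    (hV : J V = J (V ∩ B) + J (V ∩ C)) :
    J W = J (W ∩ B) + J (W ∩ C) := by
  have hBA : B ⊆ A := by rw [hunion]; exact subset_union_left
  have hCA : C ⊆ A := by rw [hunion]; exact subset_union_right
  have hWA : W ⊆ A := hWV.trans hVA
  have hBC : ∀ x, x ∈ B → x ∉ C := fun x hx hx' =>
    (Finset.disjoint_left.mp hdisj) hx hx'
  -- splitting identities for subsets of A
  have splitU : ∀ U ⊆ A, (U ∩ B) ∪ (U ∩ C) = U := by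
    intro U hU
    ext x
    simp only [mem_union, mem_inter]
    constructor
    · rintro (⟨h, _⟩ | ⟨h, _⟩) <;> exact h
    · intro h
      have hx := hU h
      rw [hunion] at hx
      rcases mem_union.mp hx with hb | hc
      · exact Or.inl ⟨h, hb⟩
      · exact Or.inr ⟨h, hc⟩
  have splitI : ∀ U : Finset α, (U ∩ B) ∩ (U ∩ C) = ∅ := by
    intro U
    ext x
    simp only [mem_inter, notMem_empty, iff_false]
    rintro ⟨⟨_, hb⟩, ⟨_, hc⟩⟩
    exact hBC x hb hc
  -- H is additive across the B/C split on every subset of A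
  have Hadd : ∀ U ⊆ A, H U = H (U ∩ B) + H (U ∩ C) := by
    intro U hU
    have h1 := hssa (U ∩ B) (inter_subset_left.trans hU) (U ∩ C)
      (inter_subset_left.trans hU)
    rw [splitU U hU, splitI U] at h1
    have e3 : (U ∪ C) ∪ B = A := by
      ext x
      simp only [mem_union]
      constructor
      · rintro ((h | h) | h)
        · exact hU h
        · exact hCA h
        · exact hBA h
      · intro h
        rw [hunion] at h
        rcases mem_union.mp h with hb | hc
        · exact Or.inr hb
        · exact Or.inl (Or.inr hc)
    have e4 : (U ∪ C) ∩ B = U ∩ B := by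
      ext x
      simp only [mem_inter, mem_union]
      constructor
      · rintro ⟨h | h, hb⟩
        · exact ⟨h, hb⟩
        · exact absurd h (fun hc => hBC x hb hc)
      · rintro ⟨h, hb⟩; exact ⟨Or.inl h, hb⟩
    have h2 := hssa U hU C hCA
    have h3 := hssa (U ∪ C) (union_subset hU hCA) B hBA
    rw [e3, e4] at h3
    linarith
  -- J of the empty set is 0
  have hJ0 : J ∅ = 0 := by
    have h := hJ.1 ∅ (empty_subset A)
    linarith [h.1, h.2, hH0.le, hH0.ge]
  -- set identities for the main submodularity applications
  have eVB : (W ∪ (V ∩ B)) ∪ (V ∩ C) = V := by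
    ext x
    simp only [mem_union, mem_inter]
    constructor
    · rintro ((h | ⟨h, _⟩) | ⟨h, _⟩)
      · exact hWV h
      · exact h
      · exact h
    · intro h
      have hx := hVA h
      rw [hunion] at hx
      rcases mem_union.mp hx with hb | hc
      · exact Or.inl (Or.inr ⟨h, hb⟩)
      · exact Or.inr ⟨h, hc⟩
  have eWC : (W ∪ (V ∩ B)) ∩ (V ∩ C) = W ∩ C := by
    ext x
    simp only [mem_inter, mem_union]
    constructor
    · rintro ⟨h | ⟨_, hb⟩, ⟨_, hc⟩⟩
      · exact ⟨h, hc⟩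
      · exact absurd hc (hBC x hb)
    · rintro ⟨hw, hc⟩
      exact ⟨Or.inl hw, hWV hw, hc⟩
  have eWB : W ∩ (V ∩ B) = W ∩ B := by
    ext x
    simp only [mem_inter]
    constructor
    · rintro ⟨hw, _, hb⟩; exact ⟨hw, hb⟩
    · rintro ⟨hw, hb⟩; exact ⟨hw, hWV hw, hb⟩
  -- submodularity applications for J
  have hX : W ∪ (V ∩ B) ⊆ A := union_subset hWA (inter_subset_left.trans hVA)
  have i1 := hJ.2.2 (W ∪ (V ∩ B)) hX (V ∩ C) (inter_subset_left.trans hVA)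
  rw [eVB, eWC] at i1
  have i2 := hJ.2.2 W hWA (V ∩ B) (inter_subset_left.trans hVA)
  rw [eWB] at i2
  have i3 := hJ.2.2 (W ∩ B) (inter_subset_left.trans hWA)
    (W ∩ C) (inter_subset_left.trans hWA)
  rw [splitU W hWA, splitI W] at i3
  have hHV := Hadd V hVA
  have hHW := Hadd W hWA
  linarith
end

section
/- Let A be a finite set, H a nonnegative, strongly subadditive real-valued function on subsets of A with H(∅) = 0, σ(a) > 0 a scale for each a ∈ A, and suppose A is the disjoint union of B and C with H(A) = H(B) + H(C). Fix y with 0 ≤ y ≤ H(A), and suppose Ĵ is a descriptor profile with Ĵ(A) ≤ y that maximizes the utility ∑_{a∈A} σ(a) J({a}) among all descriptor profiles J with J(A) ≤ y. Then Ĵ(A) = Ĵ(B) + Ĵ(C). -/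
open Finset

/-- If `A` is the disjoint union of independent `B` and `C`, and `Ĵ` is a descriptor
profile with `Ĵ(A) ≤ y` maximizing the utility `∑_{a∈A} σ(a) J({a})` among all such
descriptor profiles, then `Ĵ(A) = Ĵ(B) + Ĵ(C)`. -/
theorem optimal_descriptor_additive {α : Type*} [DecidableEq α]
    (A B C : Finset α) (H : Finset α → ℝ) (σ : α → ℝ)
    (hpos : ∀ U ⊆ A, 0 ≤ H U) (hH0 : H ∅ = 0)
    (hssa : ∀ U ⊆ A, ∀ V ⊆ A, H (U ∪ V) ≤ H U + H V - H (U ∩ V))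
    (hσ : ∀ a ∈ A, 0 < σ a)
    (hdisj : Disjoint B C) (hunion : A = B ∪ C)
    (hind : H A = H B + H C)
    (y : ℝ) (hy0 : 0 ≤ y) (hyH : y ≤ H A)
    (Jhat : Finset α → ℝ)
    (hJhat : IsDescriptor A H Jhat) (hJhatA : Jhat A ≤ y)
    (hmax : ∀ J : Finset α → ℝ, IsDescriptor A H J → J A ≤ y →
      ∑ a ∈ A, σ a * J {a} ≤ ∑ a ∈ A, σ a * Jhat {a}) :
    Jhat A = Jhat B + Jhat C := by
  obtain ⟨hJ1, hJ2, hJ3⟩ := hJhat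
  have hBsub : B ⊆ A := by rw [hunion]; exact subset_union_left
  have hCsub : C ⊆ A := by rw [hunion]; exact subset_union_right
  have hJ0 : Jhat ∅ = 0 := by
    have h := hJ1 ∅ (empty_subset A); rw [hH0] at h; linarith [h.1, h.2]
  have hBC : B ∩ C = ∅ := by
    ext x; simp only [mem_inter, notMem_empty, iff_false, not_and]
    exact fun hb hc => disjoint_left.mp hdisj hb hc
  -- H decomposes over the independent parts B and C on every subset of A
  have hHdec : ∀ V ⊆ A, H V = H (V ∩ B) + H (V ∩ C) := by
    intro V hV
    have hVB : V ∩ B ⊆ A := inter_subset_left.trans hV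
    have hVC : V ∩ C ⊆ A := inter_subset_left.trans hV
    have e1 : (V ∩ B) ∪ (V ∩ C) = V := by
      rw [← inter_union_distrib_left, ← hunion, inter_eq_left.mpr hV]
    have e2 : (V ∩ B) ∩ (V ∩ C) = ∅ := by
      ext x; simp only [mem_inter, notMem_empty, iff_false]
      rintro ⟨⟨_, hb⟩, _, hc⟩; exact disjoint_left.mp hdisj hb hc
    have h1 := hssa (V ∩ B) hVB (V ∩ C) hVC
    rw [e1, e2, hH0] at h1
    have h2 := hssa V hV B hBsub
    have e3 : (V ∪ B) ∪ C = A := by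
      rw [union_assoc, ← hunion]
      exact union_eq_right.mpr hV
    have e4 : (V ∪ B) ∩ C = V ∩ C := by
      ext x; simp only [mem_inter, mem_union]
      constructor
      · rintro ⟨hv | hb, hc⟩
        · exact ⟨hv, hc⟩
        · exact absurd hc (disjoint_left.mp hdisj hb)
      · rintro ⟨hv, hc⟩; exact ⟨Or.inl hv, hc⟩
    have h3 := hssa (V ∪ B) (union_subset hV hBsub) C hCsub
    rw [e3, e4] at h3
    linarith
  -- one direction from submodularity
  have hsub : Jhat B + Jhat C ≤ Jhat A := by
    have h := hJ3 B hBsub C hCsub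
    rw [← hunion, hBC, hH0, hJ0] at h
    linarith
  by_contra hne
  have hlt : Jhat B + Jhat C < Jhat A := hsub.lt_of_ne (fun h => hne h.symm)
  by_cases hall : ∀ b ∈ A, Jhat {b} = H {b}
  · -- all singletons saturated: Jhat = H on A, B, C, contradiction
    have key : ∀ S : Finset α, S ⊆ A → H S ≤ Jhat S := by
      intro S
      induction S using Finset.induction_on with
      | empty => intro _; rw [hH0, hJ0]
      | @insert a S haS ih =>
        intro hS
        have hSA : S ⊆ A := (subset_insert _ _).trans hS
        have haA : a ∈ A := hS (mem_insert_self a S)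
        have h3 := hJ3 S hSA {a} (singleton_subset_iff.mpr haA)
        have e1 : S ∪ {a} = insert a S := by rw [union_comm, ← insert_eq]
        have e2 : S ∩ {a} = ∅ := by
          ext x; simp only [mem_inter, mem_singleton, notMem_empty, iff_false]
          rintro ⟨hx, rfl⟩; exact haS hx
        rw [e1, e2, hH0, hJ0] at h3
        linarith [ih hSA, hall a haA]
    have eA : Jhat A = H A := le_antisymm (hJ1 A Subset.rfl).2 (key A Subset.rfl)
    have eB : Jhat B = H B := le_antisymm (hJ1 B hBsub).2 (key B hBsub)
    have eC : Jhat C = H C := le_antisymm (hJ1 C hCsub).2 (key C hCsub)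
    linarith
  · push_neg at hall
    obtain ⟨a, haA, hane⟩ := hall
    have halt : Jhat {a} < H {a} :=
      lt_of_le_of_ne (hJ1 {a} (singleton_subset_iff.mpr haA)).2 hane
    -- the decomposed profile J'
    set J' : Finset α → ℝ := fun V => Jhat (V ∩ B) + Jhat (V ∩ C) with hJ'def
    have hJ'single : ∀ b ∈ A, J' {b} = Jhat {b} := by
      intro b hb
      rw [hunion, mem_union] at hb
      rcases hb with hb | hb
      · have e1 : {b} ∩ B = {b} := inter_eq_left.mpr (singleton_subset_iff.mpr hb)
        have e2 : {b} ∩ C = ∅ := by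
          ext x; simp only [mem_inter, mem_singleton, notMem_empty, iff_false]
          rintro ⟨rfl, hc⟩; exact disjoint_left.mp hdisj hb hc
        simp only [hJ'def, e1, e2, hJ0, add_zero]
      · have e1 : {b} ∩ B = ∅ := by
          ext x; simp only [mem_inter, mem_singleton, notMem_empty, iff_false]
          rintro ⟨rfl, hbB⟩; exact disjoint_left.mp hdisj hbB hb
        have e2 : {b} ∩ C = {b} := inter_eq_left.mpr (singleton_subset_iff.mpr hb)
        simp only [hJ'def, e1, e2, hJ0, zero_add]
    have hJ'A : J' A = Jhat B + Jhat C := by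
      simp only [hJ'def]
      rw [inter_eq_right.mpr hBsub, inter_eq_right.mpr hCsub]
    have hJ'desc : IsDescriptor A H J' := by
      refine ⟨?_, ?_, ?_⟩
      · intro V hV
        have hVB : V ∩ B ⊆ A := inter_subset_left.trans hV
        have hVC : V ∩ C ⊆ A := inter_subset_left.trans hV
        constructor
        · exact add_nonneg (hJ1 _ hVB).1 (hJ1 _ hVC).1
        · rw [hHdec V hV]
          exact add_le_add (hJ1 _ hVB).2 (hJ1 _ hVC).2
      · intro W V hWV hVA
        have hWA := hWV.trans hVA
        have hB2 := hJ2 (W ∩ B) (V ∩ B) (inter_subset_inter hWV Subset.rfl)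
          (inter_subset_left.trans hVA)
        have hC2 := hJ2 (W ∩ C) (V ∩ C) (inter_subset_inter hWV Subset.rfl)
          (inter_subset_left.trans hVA)
        rw [hHdec V hVA, hHdec W hWA]
        simp only [hJ'def]
        constructor <;> linarith [hB2.1, hB2.2, hC2.1, hC2.2]
      · intro V hV W hW
        have eUB : (V ∪ W) ∩ B = (V ∩ B) ∪ (W ∩ B) := by
          ext x; simp only [mem_inter, mem_union]; tauto
        have eUC : (V ∪ W) ∩ C = (V ∩ C) ∪ (W ∩ C) := by
          ext x; simp only [mem_inter, mem_union]; tauto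
        have eIB : (V ∩ W) ∩ B = (V ∩ B) ∩ (W ∩ B) := by
          ext x; simp only [mem_inter]; tauto
        have eIC : (V ∩ W) ∩ C = (V ∩ C) ∩ (W ∩ C) := by
          ext x; simp only [mem_inter]; tauto
        have hB3 := hJ3 (V ∩ B) (inter_subset_left.trans hV) (W ∩ B)
          (inter_subset_left.trans hW)
        have hC3 := hJ3 (V ∩ C) (inter_subset_left.trans hV) (W ∩ C)
          (inter_subset_left.trans hW)
        simp only [hJ'def]
        rw [hHdec V hV, hHdec W hW, hHdec (V ∪ W) (union_subset hV hW),
          hHdec (V ∩ W) (inter_subset_left.trans hV), eUB, eUC, eIB, eIC]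
        linarith
    obtain ⟨hd1, hd2, hd3⟩ := hJ'desc
    have hJ'Ay : J' A < y := by rw [hJ'A]; linarith
    have hJ'AH : J' A < H A := lt_of_lt_of_le hJ'Ay hyH
    -- convex combination with H, pushed as far as the budget y allows
    set t : ℝ := (y - J' A) / (H A - J' A) with htdef
    have ht0 : 0 < t := div_pos (by linarith) (by linarith)
    have ht1 : t ≤ 1 := (div_le_one (by linarith)).mpr (by linarith)
    have htmul : t * (H A - J' A) = y - J' A := by
      rw [htdef]
      exact div_mul_cancel₀ _ (by linarith : (0:ℝ) < H A - J' A).ne'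
    set Jt : Finset α → ℝ := fun V => (1 - t) * J' V + t * H V with hJtdef
    have hJtdesc : IsDescriptor A H Jt := by
      refine ⟨?_, ?_, ?_⟩
      · intro V hV
        simp only [hJtdef]
        constructor
        · exact add_nonneg (mul_nonneg (by linarith) (hd1 V hV).1)
            (mul_nonneg ht0.le (hpos V hV))
        · have h1 := mul_le_mul_of_nonneg_left (hd1 V hV).2
            (by linarith : (0:ℝ) ≤ 1 - t)
          have e : (1 - t) * H V + t * H V = H V := by ring
          linarith
      · intro W V hWV hVA
        have h := hd2 W V hWV hVA
        have hH : 0 ≤ H V - H W := by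
          linarith [(hJ2 W V hWV hVA).1, (hJ2 W V hWV hVA).2]
        simp only [hJtdef]
        have e : (1 - t) * J' V + t * H V - ((1 - t) * J' W + t * H W)
            = (1 - t) * (J' V - J' W) + t * (H V - H W) := by ring
        have h1 := mul_le_mul_of_nonneg_left h.2 (by linarith : (0:ℝ) ≤ 1 - t)
        have h2 := mul_nonneg (by linarith : (0:ℝ) ≤ 1 - t) h.1
        have h3 := mul_nonneg ht0.le hH
        have e2 : (1 - t) * (H V - H W) + t * (H V - H W) = H V - H W := by ring
        constructor <;> linarith
      · intro V hV W hW
        simp only [hJtdef]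
        have e : (1 - t) * J' V + t * H V + ((1 - t) * J' W + t * H W)
            - ((1 - t) * J' (V ∪ W) + t * H (V ∪ W))
            - ((1 - t) * J' (V ∩ W) + t * H (V ∩ W))
            = (1 - t) * (J' V + J' W - J' (V ∪ W) - J' (V ∩ W))
              + t * (H V + H W - H (V ∪ W) - H (V ∩ W)) := by ring
        have h1 := mul_le_mul_of_nonneg_left (hd3 V hV W hW)
          (by linarith : (0:ℝ) ≤ 1 - t)
        have e2 : (1 - t) * (H V + H W - H (V ∪ W) - H (V ∩ W))
            + t * (H V + H W - H (V ∪ W) - H (V ∩ W))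
            = H V + H W - H (V ∪ W) - H (V ∩ W) := by ring
        linarith
    have hJtA : Jt A ≤ y := by
      simp only [hJtdef]
      have e : (1 - t) * J' A + t * H A = J' A + t * (H A - J' A) := by ring
      rw [e, htmul]
      linarith
    have hm := hmax Jt hJtdesc hJtA
    have hsum : ∑ b ∈ A, σ b * Jt {b}
        = (∑ b ∈ A, σ b * Jhat {b}) + t * ∑ b ∈ A, σ b * (H {b} - Jhat {b}) := by
      rw [Finset.mul_sum, ← Finset.sum_add_distrib]
      refine Finset.sum_congr rfl (fun b hb => ?_)
      simp only [hJtdef]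
      rw [hJ'single b hb]
      ring
    have hterms : ∀ b ∈ A, 0 ≤ σ b * (H {b} - Jhat {b}) := by
      intro b hb
      exact mul_nonneg (hσ b hb).le
        (by linarith [(hJ1 {b} (singleton_subset_iff.mpr hb)).2])
    have hbig : σ a * (H {a} - Jhat {a}) ≤ ∑ b ∈ A, σ b * (H {b} - Jhat {b}) :=
      Finset.single_le_sum hterms haA
    have hgain : 0 < t * ∑ b ∈ A, σ b * (H {b} - Jhat {b}) := by
      have h1 : 0 < σ a * (H {a} - Jhat {a}) := mul_pos (hσ a haA) (by linarith)
      exact mul_pos ht0 (lt_of_lt_of_le h1 hbig)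
    linarith
end

section
/- Let A be a finite set partitioned into pairwise disjoint nonempty blocks B_1, …, B_m, let σ(a) > 0 be the scale of each component, and let H be the block information function: there are reals h_1, …, h_m ≥ 0 such that H(V) = ∑_{i : V ∩ B_i ≠ ∅} h_i for every V ⊆ A (so H(∅) = 0, components within a block are completely interdependent, and distinct blocks are independent). Define I(S) = −∑_{T ⊆ S} (−1)^{|T|} H(T ∪ (A∖S)) for nonempty S ⊆ A, s(S) = ∑_{a∈S} σ(a), and the complexity profile C(y) = ∑_{S nonempty, s(S) ≥ y} I(S). Then for every y ≥ 0, C(y) = ∑_{i : s(B_i) ≥ y} h_i; i.e. the complexity profile is a sum of step functions, one rectangle of height h_i and width s(B_i) per block. -/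
open Finset

private lemma real_sum_pow_card {α : Type*} [DecidableEq α] (s : Finset α) :
    (∑ T ∈ s.powerset, (-1 : ℝ) ^ T.card) = if s = ∅ then 1 else 0 := by
  have h := Finset.sum_powerset_neg_one_pow_card (x := s)
  calc (∑ T ∈ s.powerset, (-1:ℝ) ^ T.card)
      = ((∑ T ∈ s.powerset, (-1:ℤ) ^ T.card : ℤ) : ℝ) := by push_cast; rfl
    _ = _ := by rw [h]; split_ifs <;> simp

private lemma sharedInfo_eq {α : Type*} [DecidableEq α]
    (A : Finset α) (H : Finset α → ℝ) (m : ℕ)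
    (B : Fin m → Finset α) (h : Fin m → ℝ)
    (hB : ∀ i, B i ⊆ A)
    (hH : ∀ V ⊆ A, H V = ∑ i ∈ Finset.univ.filter (fun i => (V ∩ B i).Nonempty), h i)
    (S : Finset α) (hSA : S ⊆ A) (hS : S ≠ ∅) :
    sharedInfo A H S = ∑ i ∈ Finset.univ.filter (fun i => B i = S), h i := by
  unfold sharedInfo
  have hrw : ∀ T ∈ S.powerset, (-1 : ℝ) ^ T.card * H (T ∪ (A \ S))
      = ∑ i : Fin m, (-1:ℝ) ^ T.card *
          (if ((T ∪ (A \ S)) ∩ B i).Nonempty then h i else 0) := by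
    intro T hT
    rw [hH _ (by
      apply Finset.union_subset ((Finset.mem_powerset.1 hT).trans hSA)
      exact Finset.sdiff_subset)]
    rw [Finset.sum_filter, Finset.mul_sum]
  rw [Finset.sum_congr rfl hrw, Finset.sum_comm]
  have key : ∀ i : Fin m,
      (∑ T ∈ S.powerset, (-1:ℝ) ^ T.card *
        (if ((T ∪ (A \ S)) ∩ B i).Nonempty then h i else 0))
      = if B i = S then -h i else 0 := by
    intro i
    by_cases hc : ((A \ S) ∩ B i).Nonempty
    · have hne : B i ≠ S := by
        rintro rfl
        obtain ⟨x, hx⟩ := hc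
        simp only [Finset.mem_inter, Finset.mem_sdiff] at hx
        exact hx.1.2 hx.2
      rw [if_neg hne]
      have : ∀ T ∈ S.powerset, (-1:ℝ) ^ T.card *
          (if ((T ∪ (A \ S)) ∩ B i).Nonempty then h i else 0)
          = (-1:ℝ) ^ T.card * h i := by
        intro T _
        rw [if_pos]
        obtain ⟨x, hx⟩ := hc
        exact ⟨x, by simp only [Finset.mem_inter, Finset.mem_union] at hx ⊢; tauto⟩
      rw [Finset.sum_congr rfl this, ← Finset.sum_mul, real_sum_pow_card, if_neg hS,
        zero_mul]
    · -- (A \ S) ∩ B i = ∅, so B i ⊆ S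
      have hcond : ∀ T : Finset α, ((T ∪ (A \ S)) ∩ B i).Nonempty ↔ (T ∩ B i).Nonempty := by
        intro T
        rw [Finset.union_inter_distrib_right]
        constructor
        · rintro ⟨x, hx⟩
          rcases Finset.mem_union.1 hx with hx' | hx'
          · exact ⟨x, hx'⟩
          · exact absurd ⟨x, hx'⟩ hc
        · rintro ⟨x, hx⟩; exact ⟨x, Finset.mem_union_left _ hx⟩
      have step : ∀ T ∈ S.powerset, (-1:ℝ) ^ T.card *
          (if ((T ∪ (A \ S)) ∩ B i).Nonempty then h i else 0)
          = (-1:ℝ) ^ T.card * h i -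
            (-1:ℝ) ^ T.card * (if T ∩ B i = ∅ then h i else 0) := by
        intro T _
        simp only [hcond T]
        by_cases hT : (T ∩ B i).Nonempty
        · rw [if_pos hT, if_neg (Finset.nonempty_iff_ne_empty.1 hT), mul_zero, sub_zero]
        · rw [if_neg hT, if_pos (Finset.not_nonempty_iff_eq_empty.1 hT)]; ring
      rw [Finset.sum_congr rfl step, Finset.sum_sub_distrib, ← Finset.sum_mul,
        real_sum_pow_card, if_neg hS, zero_mul, zero_sub]
      have hfilter : S.powerset.filter (fun T => T ∩ B i = ∅) = (S \ B i).powerset := by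
        ext T
        simp only [Finset.mem_filter, Finset.mem_powerset, Finset.subset_sdiff,
          ← Finset.disjoint_iff_inter_eq_empty]
      have hmul : ∀ T ∈ S.powerset, (-1:ℝ) ^ T.card * (if T ∩ B i = ∅ then h i else 0)
          = if T ∩ B i = ∅ then (-1:ℝ) ^ T.card * h i else 0 := fun T _ => by
        split_ifs <;> simp
      rw [Finset.sum_congr rfl hmul, ← Finset.sum_filter, hfilter, ← Finset.sum_mul,
        real_sum_pow_card]
      have hBiS : B i ⊆ S := by
        intro x hx
        by_contra hxS
        exact hc ⟨x, Finset.mem_inter.2 ⟨Finset.mem_sdiff.2 ⟨hB i hx, hxS⟩, hx⟩⟩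
      have : S \ B i = ∅ ↔ B i = S := by
        rw [Finset.sdiff_eq_empty_iff_subset]
        exact ⟨fun hs => Finset.Subset.antisymm hBiS hs, fun e => e ▸ Finset.Subset.refl _⟩
      simp only [this]
      by_cases he : B i = S
      · rw [if_pos he, if_pos he, one_mul]
      · rw [if_neg he, if_neg he, zero_mul, neg_zero]
  rw [Finset.sum_congr rfl (fun i _ => key i), Finset.sum_filter, ← Finset.sum_neg_distrib]
  exact Finset.sum_congr rfl fun i _ => by split_ifs <;> simp

/-- Complexity profile of an independent collection of intradependent blocks: if `A` is
partitioned into blocks `B_1, …, B_m` and `H(V) = ∑_{i : V ∩ B_i ≠ ∅} h_i`, then for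
every `y ≥ 0`, `C(y) = ∑_{i : s(B_i) ≥ y} h_i` — a sum of one rectangle of height
`h_i` and width `s(B_i)` per block. -/
theorem complexityProfile_blocks {α : Type*} [DecidableEq α]
    (A : Finset α) (H : Finset α → ℝ) (σ : α → ℝ) (m : ℕ)
    (B : Fin m → Finset α) (h : Fin m → ℝ)
    (hσ : ∀ a ∈ A, 0 < σ a)
    (hne : ∀ i, (B i).Nonempty)
    (hdisj : ∀ i j, i ≠ j → Disjoint (B i) (B j))
    (hcover : Finset.univ.biUnion B = A)
    (hh : ∀ i, 0 ≤ h i)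
    (hH : ∀ V ⊆ A, H V = ∑ i ∈ Finset.univ.filter (fun i => (V ∩ B i).Nonempty), h i) :
    ∀ y : ℝ, 0 ≤ y →
      complexityProfile A H σ y
        = ∑ i ∈ Finset.univ.filter (fun i => y ≤ ∑ a ∈ B i, σ a), h i := by
  intro y hy
  have hB : ∀ i, B i ⊆ A := fun i => hcover ▸ Finset.subset_biUnion_of_mem B (Finset.mem_univ i)
  unfold complexityProfile
  rw [Finset.sum_congr rfl (fun S hS => by
    simp only [Finset.mem_filter, Finset.mem_powerset] at hS
    exact sharedInfo_eq A H m B h hB hH S hS.1 hS.2.1)]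
  rw [Finset.sum_congr rfl (fun S _ => Finset.sum_filter (fun i => B i = S) h),
    Finset.sum_comm]
  conv_rhs => rw [Finset.sum_filter]
  refine Finset.sum_congr rfl fun i _ => ?_
  rw [Finset.sum_ite_eq]
  simp [Finset.mem_filter, Finset.mem_powerset, hB i, (hne i).ne_empty]
end

section
/- Let A be a nonempty finite set with scale σ(a) > 0 for each component, and let H be the single-block information function: H(∅) = 0 and H(V) = h for every nonempty V ⊆ A, where h > 0 is a fixed real (every nonempty subset contains complete information about the system). Then the maximal utility of information is U(y) = (∑_{a∈A} σ(a)) · min(y, h) for every y ≥ 0; in particular the marginal utility of information equals the total scale ∑_{a∈A} σ(a) for 0 ≤ y < h and 0 for y > h. -/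
open Finset

/-- Maximal utility of information for a single completely interdependent block:
if `H(∅) = 0` and `H(V) = h` for every nonempty `V ⊆ A`, then
`U(y) = (∑_{a∈A} σ(a)) · min(y, h)` for every `y ≥ 0`; in particular the marginal
utility equals the total scale for `0 ≤ y < h` and `0` for `y > h`. -/
theorem maxUtility_single_block {α : Type*} [DecidableEq α]
    (A : Finset α) (H : Finset α → ℝ) (σ : α → ℝ) (h : ℝ)
    (hA : A.Nonempty) (hσ : ∀ a ∈ A, 0 < σ a) (hh : 0 < h)
    (hH0 : H ∅ = 0) (hH : ∀ V ⊆ A, V ≠ ∅ → H V = h) :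
    ∀ y : ℝ, 0 ≤ y →
      maxUtility A H σ y = (∑ a ∈ A, σ a) * min y h := by
  intro y hy
  set m := min y h with hm
  have hm0 : 0 ≤ m := le_min hy hh.le
  have hmy : m ≤ y := min_le_left _ _
  have hmh : m ≤ h := min_le_right _ _
  -- the witness descriptor
  set J : Finset α → ℝ := fun V => if V = ∅ then 0 else m with hJ
  have hJdesc : IsDescriptor A H J := by
    refine ⟨?_, ?_, ?_⟩
    · intro V hV
      by_cases hVe : V = ∅
      · simp [hJ, hVe, hH0]
      · simp only [hJ, if_neg hVe]
        exact ⟨hm0, by rw [hH V hV hVe]; exact hmh⟩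
    · intro W V hWV hVA
      by_cases hWe : W = ∅
      · by_cases hVe : V = ∅
        · simp [hJ, hWe, hVe, hH0]
        · simp only [hJ, hWe, if_pos rfl, if_neg hVe, hH0, hH V hVA hVe]
          constructor <;> linarith
      · have hVe : V ≠ ∅ := fun hv => hWe (Finset.subset_empty.mp (hv ▸ hWV))
        simp only [hJ, if_neg hWe, if_neg hVe,
          hH V hVA hVe, hH W (hWV.trans hVA) hWe]
        constructor <;> linarith
    · intro V hVA W hWA
      by_cases hVe : V = ∅
      · subst hVe; simp
      · by_cases hWe : W = ∅
        · subst hWe; simp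
        · have hUe : V ∪ W ≠ ∅ := fun hu =>
            hVe (Finset.subset_empty.mp (hu ▸ Finset.subset_union_left))
          have hUA : V ∪ W ⊆ A := Finset.union_subset hVA hWA
          by_cases hIe : V ∩ W = ∅
          · simp only [hJ, if_neg hVe, if_neg hWe, if_neg hUe, if_pos hIe,
              hH V hVA hVe, hH W hWA hWe, hH _ hUA hUe, hIe, hH0, if_true, eq_self_iff_true]
            linarith
          · simp only [hJ, if_neg hVe, if_neg hWe, if_neg hUe, if_neg hIe,
              hH V hVA hVe, hH W hWA hWe, hH _ hUA hUe,
              hH _ ((Finset.inter_subset_left).trans hVA) hIe]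
            linarith
  have hJA : J A ≤ y := by
    simp only [hJ, if_neg (Finset.nonempty_iff_ne_empty.mp hA)]
    exact hmy
  have hJsum : (∑ a ∈ A, σ a * J {a}) = (∑ a ∈ A, σ a) * m := by
    rw [Finset.sum_mul]
    refine Finset.sum_congr rfl fun a _ => ?_
    simp [hJ]
  -- membership of the target value
  have hmem : (∑ a ∈ A, σ a) * m ∈ {u : ℝ | ∃ J : Finset α → ℝ,
      IsDescriptor A H J ∧ J A ≤ y ∧ u = ∑ a ∈ A, σ a * J {a}} :=
    ⟨J, hJdesc, hJA, hJsum.symm⟩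
  -- upper bound
  have hub : ∀ u ∈ {u : ℝ | ∃ J : Finset α → ℝ,
      IsDescriptor A H J ∧ J A ≤ y ∧ u = ∑ a ∈ A, σ a * J {a}},
      u ≤ (∑ a ∈ A, σ a) * m := by
    rintro u ⟨K, ⟨hK1, hK2, _⟩, hKA, rfl⟩
    rw [Finset.sum_mul]
    refine Finset.sum_le_sum fun a ha => ?_
    have haA : {a} ⊆ A := Finset.singleton_subset_iff.mpr ha
    have h1 : K {a} ≤ h := by
      have := (hK1 {a} haA).2
      rwa [hH {a} haA (by simp)] at this
    have h2 : K {a} ≤ y := by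
      have := (hK2 {a} A haA le_rfl).1
      linarith
    exact mul_le_mul_of_nonneg_left (le_min h2 h1) (hσ a ha).le
  have hB : 0 ≤ (∑ a ∈ A, σ a) * m :=
    mul_nonneg (Finset.sum_nonneg fun a ha => (hσ a ha).le) hm0
  exact le_antisymm (Real.sSup_le hub hB) (le_csSup ⟨_, hub⟩ hmem)
end
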